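/- arXiv:2406.05470 — 8 statements merged into one kernel-verified Lean document; each statement's English description precedes it below -/
import Mathlib

section
/- Let d ≥ 1, let K ⊂ ℝ^d be a compact set, let U be a compact subset of the space C(K) of continuous real-valued functions on K with the supremum norm, and let ψ : ℝ → ℝ be a Tauber–Wiener function. Then for every ε > 0 there exist N ∈ ℕ, vectors ξ_1, …, ξ_N ∈ ℝ^d and scalars θ_1, …, θ_N ∈ ℝ (all independent of f), and continuous maps w_1, …, w_N : U → ℝ, such that for every f ∈ U, sup_{x ∈ K} | f(x) − ∑_{i=1}^N w_i(f) · ψ(ξ_i · x + θ_i) | < ε, where ξ_i · x denotes the Euclidean inner product. -/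
open scoped BigOperators RealInnerProductSpace

/-- A continuous function `ψ : ℝ → ℝ` is a Tauber–Wiener function if for every compact
interval `[a,b]`, finite linear combinations `x ↦ ∑ᵢ wᵢ ψ(ξᵢ x + θᵢ)` are dense in
`C([a,b])` with the supremum norm. -/
def IsTauberWiener (ψ : ℝ → ℝ) : Prop :=
  Continuous ψ ∧
    ∀ a b : ℝ, ∀ f : ℝ → ℝ, ContinuousOn f (Set.Icc a b) → ∀ ε : ℝ, 0 < ε →
      ∃ (N : ℕ) (w ξ θ : Fin N → ℝ),
        ∀ x ∈ Set.Icc a b, |f x - ∑ i, w i * ψ (ξ i * x + θ i)| < ε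

/-! Cosine ridges `x ↦ cos (⟪ξ, x⟫ + θ)` span a unital subalgebra of `C(K, ℝ)` (product-to-sum
formula) that separates points, so their span is dense by Stone–Weierstrass. Each of them is a
uniform limit of combinations of `ψ`-ridges: the Tauber–Wiener property approximates `cos` on the
bounded range of `x ↦ ⟪ξ, x⟫ + θ`. Hence the `ψ`-ridges have dense span. For the compact family
`U`, compactness gives finitely many ridges whose span comes within `ε` of every `f ∈ U`; the set
of good coefficient vectors for `f` is convex and locally constant choices exist, so a partition
of unity on `U` glues them into coefficients depending continuously on `f`. -/

open Set Submodule Metric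

open scoped Pointwise

section Approximation

variable {X : Type*} [NormedAddCommGroup X] [NormedSpace ℝ X]

theorem IsCompact.exists_fin_subset_thickening_span {S U : Set X}
    (hS : Dense (span ℝ S : Set X)) (hU : IsCompact U) {ε : ℝ} (hε : 0 < ε) :
    ∃ (N : ℕ) (v : Fin N → X), (∀ i, v i ∈ S) ∧ U ⊆ thickening ε (span ℝ (range v)) := by
  classical
  have : Nonempty {T : Finset X // ↑T ⊆ S} := ⟨⟨∅, Finset.coe_empty ▸ empty_subset S⟩⟩
  obtain ⟨⟨T, hTS⟩, hUT⟩ := hU.elim_directed_cover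
    (fun T : {T : Finset X // ↑T ⊆ S} => thickening ε (span ℝ (T.1 : Set X)))
    (fun _ => isOpen_thickening)
    (fun f _ => by
      obtain ⟨h, hh, hfh⟩ := hS.exists_dist_lt f hε
      obtain ⟨T, hTS, hhT⟩ := mem_span_finite_of_mem_span hh
      exact mem_iUnion.2 ⟨⟨T, hTS⟩, mem_thickening_iff.2 ⟨h, hhT, hfh⟩⟩)
    (fun T₁ T₂ => ⟨⟨T₁.1 ∪ T₂.1, by rw [Finset.coe_union]; exact union_subset T₁.2 T₂.2⟩,
      thickening_subset_of_subset ε (span_mono (Finset.coe_subset.2 Finset.subset_union_left)),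
      thickening_subset_of_subset ε (span_mono (Finset.coe_subset.2 Finset.subset_union_right))⟩)
  refine ⟨T.card, Subtype.val ∘ T.equivFin.symm, fun i => hTS (T.equivFin.symm i).2, ?_⟩
  rwa [EquivLike.range_comp, Subtype.range_coe]

theorem exists_continuous_coeffs_of_subset_thickening_span {ι : Type*} [Fintype ι]
    (v : ι → X) {U : Set X} {ε : ℝ} (hU : U ⊆ thickening ε (span ℝ (range v))) :
    ∃ a : C(U, ι → ℝ), ∀ f : U, ‖(f : X) - ∑ i, a f i • v i‖ < ε := by
  let L := Fintype.linearCombination ℝ v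
  obtain ⟨a, ha⟩ := exists_continuous_forall_mem_convex_of_local_const
    (t := fun f : U => L ⁻¹' ball (f : X) ε) (fun f => (convex_ball _ _).linear_preimage L)
    (fun f => by
      obtain ⟨h, hh, hfh⟩ := mem_thickening_iff.1 (hU f.2)
      obtain ⟨c, rfl⟩ := (mem_span_range_iff_exists_fun ℝ).1 hh
      refine ⟨c, ?_⟩
      filter_upwards [(continuous_subtype_val.tendsto f).eventually
        (isOpen_ball.mem_nhds (mem_ball.2 hfh))] with g hg
      simpa only [mem_preimage, mem_ball, dist_comm, L, Fintype.linearCombination_apply] using hg)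
  exact ⟨a, fun f => by
    simpa only [mem_preimage, mem_ball, dist_eq_norm', L, Fintype.linearCombination_apply] using ha f⟩

theorem IsCompact.exists_continuous_coeffs_of_dense_span {S U : Set X}
    (hS : Dense (span ℝ S : Set X)) (hU : IsCompact U) {ε : ℝ} (hε : 0 < ε) :
    ∃ (N : ℕ) (v : Fin N → X) (a : C(U, Fin N → ℝ)),
      (∀ i, v i ∈ S) ∧ ∀ f : U, ‖(f : X) - ∑ i, a f i • v i‖ < ε := by
  obtain ⟨N, v, hvS, hUv⟩ := hU.exists_fin_subset_thickening_span hS hε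
  obtain ⟨a, ha⟩ := exists_continuous_coeffs_of_subset_thickening_span v hUv
  exact ⟨N, v, a, hvS, ha⟩

end Approximation

section Ridge

variable {E : Type*} [NormedAddCommGroup E] [InnerProductSpace ℝ E] (K : Set E)

noncomputable def cosMap : C(ℝ, ℝ) :=
  ⟨Real.cos, Real.continuous_cos⟩

@[simp]
theorem cosMap_apply (t : ℝ) : cosMap t = Real.cos t :=
  rfl

noncomputable def ridge (ψ : C(ℝ, ℝ)) (ξ : E) (θ : ℝ) : C(K, ℝ) :=
  ψ.comp ⟨fun x => ⟪ξ, (x : E)⟫ + θ, by fun_prop⟩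

@[simp]
theorem ridge_apply (ψ : C(ℝ, ℝ)) (ξ : E) (θ : ℝ) (x : K) :
    ridge K ψ ξ θ x = ψ (⟪ξ, (x : E)⟫ + θ) :=
  rfl

def ridges (ψ : C(ℝ, ℝ)) : Set C(K, ℝ) :=
  range fun p : E × ℝ => ridge K ψ p.1 p.2

variable {K}

theorem ridge_mem_closure_span_ridges (hK : IsCompact K) {ψ : C(ℝ, ℝ)} (hψ : IsTauberWiener ψ)
    (g : C(ℝ, ℝ)) (ξ : E) (θ : ℝ) :
    ridge K g ξ θ ∈ closure (span ℝ (ridges K ψ) : Set C(K, ℝ)) := by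
  have : CompactSpace K := isCompact_iff_compactSpace.mp hK
  obtain ⟨C, hC⟩ := hK.exists_bound_of_continuousOn (f := fun x : E => ⟪ξ, x⟫ + θ) (by fun_prop)
  refine Metric.mem_closure_iff.2 fun δ hδ => ?_
  obtain ⟨N, w, η, φ, hN⟩ := hψ.2 (-C) C g g.continuous.continuousOn δ hδ
  refine ⟨∑ i, w i • ridge K ψ (η i • ξ) (η i * θ + φ i),
    sum_mem fun i _ => smul_mem _ _ (subset_span ⟨(η i • ξ, η i * θ + φ i), rfl⟩), ?_⟩
  refine (ContinuousMap.dist_lt_iff hδ).2 fun x => ?_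
  have hx := hN _ (abs_le.1 (hC x x.2))
  simp only [ContinuousMap.coe_sum, ContinuousMap.coe_smul, Finset.sum_apply, Pi.smul_apply,
    ridge_apply, smul_eq_mul, real_inner_smul_left, Real.dist_eq] at hx ⊢
  convert hx using 6
  ring

theorem ridge_cos_mul_ridge_cos (ξ η : E) (θ φ : ℝ) :
    ridge K cosMap ξ θ * ridge K cosMap η φ =
      (2⁻¹ : ℝ) • (ridge K cosMap (ξ - η) (θ - φ) + ridge K cosMap (ξ + η) (θ + φ)) := by
  ext x
  simp only [ContinuousMap.mul_apply, ContinuousMap.smul_apply, ContinuousMap.add_apply,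
    ridge_apply, cosMap_apply, inner_sub_left, inner_add_left, smul_eq_mul]
  simp only [Real.cos_add, Real.cos_sub, Real.sin_add, Real.sin_sub]
  ring

theorem mul_mem_span_ridges_cos {f g : C(K, ℝ)} (hf : f ∈ span ℝ (ridges K cosMap))
    (hg : g ∈ span ℝ (ridges K cosMap)) : f * g ∈ span ℝ (ridges K cosMap) := by
  have hmul : ridges K cosMap * ridges K cosMap ⊆ (span ℝ (ridges K cosMap) : Set C(K, ℝ)) := by
    rintro _ ⟨_, ⟨⟨ξ, θ⟩, rfl⟩, _, ⟨⟨η, φ⟩, rfl⟩, rfl⟩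
    dsimp only
    rw [ridge_cos_mul_ridge_cos]
    exact smul_mem _ _ (add_mem (subset_span ⟨(ξ - η, θ - φ), rfl⟩)
      (subset_span ⟨(ξ + η, θ + φ), rfl⟩))
  have hfg := Submodule.mul_mem_mul hf hg
  rw [span_mul_span] at hfg
  exact span_le.2 hmul hfg

variable (K) in
noncomputable def cosRidgeSubalgebra : Subalgebra ℝ C(K, ℝ) :=
  (span ℝ (ridges K cosMap)).toSubalgebra
    (subset_span ⟨(0, 0), by ext; simp⟩) fun _ _ => mul_mem_span_ridges_cos

theorem cosRidgeSubalgebra_separatesPoints : (cosRidgeSubalgebra K).SeparatesPoints := by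
  intro x y hxy
  have hne : (x : E) - y ≠ 0 := sub_ne_zero.2 (Subtype.coe_injective.ne hxy)
  set ξ := (Real.pi / ‖(x : E) - y‖ ^ 2) • ((x : E) - y)
  have hξ : ⟪ξ, (x : E)⟫ - ⟪ξ, (y : E)⟫ = Real.pi := by
    rw [← inner_sub_right, real_inner_smul_left, real_inner_self_eq_norm_sq,
      div_mul_cancel₀ _ (by positivity)]
  refine ⟨_, ⟨ridge K cosMap ξ (-⟪ξ, (y : E)⟫), subset_span ⟨(ξ, _), rfl⟩, rfl⟩, ?_⟩
  simp only [ridge_apply, cosMap_apply, ← sub_eq_add_neg, hξ, sub_self]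
  norm_num

theorem dense_span_ridges (hK : IsCompact K) {ψ : C(ℝ, ℝ)} (hψ : IsTauberWiener ψ) :
    Dense (span ℝ (ridges K ψ) : Set C(K, ℝ)) := by
  have : CompactSpace K := isCompact_iff_compactSpace.mp hK
  have hcos : span ℝ (ridges K cosMap) ≤ (span ℝ (ridges K ψ)).topologicalClosure :=
    span_le.2 (by rintro _ ⟨⟨ξ, θ⟩, rfl⟩; exact ridge_mem_closure_span_ridges hK hψ _ ξ θ)
  have hdense : Dense (cosRidgeSubalgebra K : Set C(K, ℝ)) := by
    rw [dense_iff_closure_eq, ← Subalgebra.topologicalClosure_coe,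
      ContinuousMap.subalgebra_topologicalClosure_eq_top_of_separatesPoints _
        cosRidgeSubalgebra_separatesPoints, Algebra.coe_top]
  exact dense_closure.1 (hdense.mono hcos)

end Ridge

theorem universal_approximation_for_functions_general
    (d : ℕ)
    (K : Set (EuclideanSpace ℝ (Fin d))) (hK : IsCompact K)
    (U : Set C(K, ℝ)) (hU : IsCompact U)
    (ψ : ℝ → ℝ) (hψ : IsTauberWiener ψ)
    (ε : ℝ) (hε : 0 < ε) :
    ∃ (N : ℕ) (ξ : Fin N → EuclideanSpace ℝ (Fin d)) (θ : Fin N → ℝ)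
      (w : Fin N → U → ℝ),
      (∀ i, Continuous (w i)) ∧
      ∀ f : U, ∀ x : K,
        |(f : C(K, ℝ)) x - ∑ i, w i f * ψ (⟪ξ i, (x : EuclideanSpace ℝ (Fin d))⟫ + θ i)| < ε := by
  have : CompactSpace K := isCompact_iff_compactSpace.mp hK
  obtain ⟨N, v, a, hv, ha⟩ := hU.exists_continuous_coeffs_of_dense_span
    (dense_span_ridges (ψ := ⟨ψ, hψ.1⟩) hK hψ) hε
  choose p hp using hv
  refine ⟨N, fun i => (p i).1, fun i => (p i).2, fun i f => a f i,
    fun i => (continuous_apply i).comp a.continuous, fun f x => ?_⟩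
  calc _ = ‖((f : C(K, ℝ)) - ∑ i, a f i • v i) x‖ := by
        simp [← hp, Real.norm_eq_abs]
    _ ≤ ‖(f : C(K, ℝ)) - ∑ i, a f i • v i‖ := ContinuousMap.norm_coe_le_norm _ x
    _ < ε := ha f

theorem universal_approximation_for_functions
    (d : ℕ) (hd : 1 ≤ d)
    (K : Set (EuclideanSpace ℝ (Fin d))) (hK : IsCompact K)
    (U : Set C(K, ℝ)) (hU : IsCompact U)
    (ψ : ℝ → ℝ) (hψ : IsTauberWiener ψ)
    (ε : ℝ) (hε : 0 < ε) :
    ∃ (N : ℕ) (ξ : Fin N → EuclideanSpace ℝ (Fin d)) (θ : Fin N → ℝ)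
      (w : Fin N → U → ℝ),
      (∀ i, Continuous (w i)) ∧
      ∀ f : U, ∀ x : K,
        |(f : C(K, ℝ)) x - ∑ i, w i f * ψ (⟪ξ i, (x : EuclideanSpace ℝ (Fin d))⟫ + θ i)| < ε :=
  universal_approximation_for_functions_general d K hK U hU ψ hψ ε hε
end

section
/- Let ψ : ℝ → ℝ be a Tauber–Wiener function, let X be a real Banach space, let K₁ ⊂ X and K₂ ⊂ ℝ^d be compact sets, let U be a compact subset of C(K₁), and let F : U → C(K₂) be a continuous (possibly nonlinear) operator. Then for every ε > 0 there exist N, M, m ∈ ℕ, real numbers w_{ki}, ξ_{kij}, θ_{ki}, β_k (k = 1,…,N, i = 1,…,M, j = 1,…,m), vectors c_k ∈ ℝ^d, and points x_1, …, x_m ∈ K₁, such that for every u ∈ U and every y ∈ K₂: | F(u)(y) − ∑_{k=1}^N ∑_{i=1}^M w_{ki} · ψ( ∑_{j=1}^m ξ_{kij} u(x_j) + θ_{ki} ) · ψ( c_k · y + β_k ) | < ε. -/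
open scoped BigOperators RealInnerProductSpace

/-!
By Stone–Weierstrass on `U × K₂`, the span of the functions `(u, y) ↦ exp (ℓ u + ⟪c, y⟫)`,
with `ℓ u = ∑ⱼ ξⱼ u(xⱼ)`, is dense: they are closed under products and separate points.
Each of them is the product `exp (ℓ u) * exp ⟪c, y⟫`, and each factor is a uniform limit of
sums of ridge functions `ψ (ℓ u + θ)`, resp. `ψ (⟪c, y⟫ + β)`, because `ψ` is Tauber–Wiener and
`ℓ`, `⟪c, ·⟫` have bounded range. Since `(f, g) ↦ f(u) g(y)` is continuous and bilinear, `F` is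
therefore a uniform limit of finite sums of products of ridge functions; collecting all evaluation
points of such a sum into one list gives the displayed form.
-/

open Set ContinuousMap

section RidgeFunctions

variable {T : Type*} [TopologicalSpace T]

def ridgeFunctions (ψ : ℝ → ℝ) (V : Submodule ℝ C(T, ℝ)) : Set C(T, ℝ) :=
  {g | ∃ v ∈ V, ∃ θ : ℝ, ∀ t, g t = ψ (v t + θ)}

theorem IsTauberWiener.comp_mem_closure_span_ridgeFunctions [CompactSpace T] {ψ : ℝ → ℝ}
    (hψ : IsTauberWiener ψ) {V : Submodule ℝ C(T, ℝ)} {v : C(T, ℝ)} (hv : v ∈ V)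
    (f : C(ℝ, ℝ)) :
    f.comp v ∈ (Submodule.span ℝ (ridgeFunctions ψ V)).topologicalClosure := by
  refine Metric.mem_closure_iff.mpr fun ε hε => ?_
  obtain ⟨N, w, ξ, θ, hfit⟩ :=
    hψ.2 (-‖v‖) ‖v‖ f f.continuous.continuousOn (ε / 2) (half_pos hε)
  let ridge (i : Fin N) : C(T, ℝ) :=
    ⟨fun t => ψ (ξ i * v t + θ i), hψ.1.comp (by fun_prop)⟩
  have hridge (i : Fin N) : ridge i ∈ ridgeFunctions ψ V :=
    ⟨ξ i • v, V.smul_mem _ hv, θ i, fun t => rfl⟩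
  refine ⟨∑ i, w i • ridge i, Submodule.sum_mem _ fun i _ =>
    Submodule.smul_mem _ _ (Submodule.subset_span (hridge i)), ?_⟩
  rw [dist_eq_norm]
  refine ((ContinuousMap.norm_le _ (half_pos hε).le).2 fun t => ?_).trans_lt (half_lt_self hε)
  have hvt : v t ∈ Icc (-‖v‖) ‖v‖ := abs_le.mp (by simpa using v.norm_coe_le_norm t)
  simpa [ridge] using (hfit (v t) hvt).le

end RidgeFunctions

section OuterMul

variable {T₁ T₂ : Type*} [TopologicalSpace T₁] [TopologicalSpace T₂]

def outerMulₗ : C(T₁, ℝ) →ₗ[ℝ] C(T₂, ℝ) →ₗ[ℝ] C(T₁ × T₂, ℝ) :=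
  (LinearMap.mul ℝ C(T₁ × T₂, ℝ)).compl₁₂ (compRightAlgHom ℝ ℝ fst).toLinearMap
    (compRightAlgHom ℝ ℝ snd).toLinearMap

@[simp]
theorem outerMulₗ_apply (f : C(T₁, ℝ)) (g : C(T₂, ℝ)) (p : T₁ × T₂) :
    outerMulₗ f g p = f p.1 * g p.2 :=
  rfl

theorem continuous_outerMulₗ [CompactSpace T₁] [CompactSpace T₂] :
    Continuous fun p : C(T₁, ℝ) × C(T₂, ℝ) => outerMulₗ p.1 p.2 :=
  ((continuous_precomp fst).comp continuous_fst).mul ((continuous_precomp snd).comp continuous_snd)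

theorem outerMulₗ_mem_closure_span [CompactSpace T₁] [CompactSpace T₂] {A : Set C(T₁, ℝ)}
    {B : Set C(T₂, ℝ)} {f : C(T₁, ℝ)} {g : C(T₂, ℝ)}
    (hf : f ∈ (Submodule.span ℝ A).topologicalClosure)
    (hg : g ∈ (Submodule.span ℝ B).topologicalClosure) :
    outerMulₗ f g ∈
      (Submodule.span ℝ (image2 (fun a b => outerMulₗ a b) A B)).topologicalClosure := by
  rw [← Submodule.map₂_span_span]
  exact map_mem_closure₂ (f := fun a b => outerMulₗ a b) continuous_outerMulₗ hf hg
    fun a ha b hb => Submodule.apply_mem_map₂ _ ha hb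

end OuterMul

noncomputable def realExp : C(ℝ, ℝ) :=
  ⟨Real.exp, Real.continuous_exp⟩

theorem span_realExp_comp_dense {T : Type*} [TopologicalSpace T] [CompactSpace T]
    (V : AddSubmonoid C(T, ℝ)) (hV : SeparatesPoints ((⇑) '' (V : Set C(T, ℝ)))) :
    (Submodule.span ℝ ((realExp.comp ·) '' (V : Set C(T, ℝ)))).topologicalClosure = ⊤ := by
  -- `exp` turns sums into products, so `exp ∘ V` is a submonoid and its span is an algebra.
  let S : Submonoid C(T, ℝ) :=
    { carrier := (realExp.comp ·) '' V
      mul_mem' := by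
        rintro _ _ ⟨v, hv, rfl⟩ ⟨w, hw, rfl⟩
        exact ⟨v + w, V.add_mem hv hw, by ext; simp [realExp, Real.exp_add]⟩
      one_mem' := ⟨0, V.zero_mem, by ext; simp [realExp]⟩ }
  have hspan :
      Submodule.span ℝ (S : Set C(T, ℝ)) = Subalgebra.toSubmodule (Algebra.adjoin ℝ S) := by
    rw [Algebra.adjoin_eq_span, Submonoid.closure_eq]
  have hsep : (Algebra.adjoin ℝ (S : Set C(T, ℝ))).SeparatesPoints := by
    intro x y hxy
    obtain ⟨_, ⟨v, hv, rfl⟩, hvxy⟩ := hV hxy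
    exact ⟨_, ⟨_, Algebra.subset_adjoin ⟨v, hv, rfl⟩, rfl⟩, fun h => hvxy (Real.exp_injective h)⟩
  have hSW := subalgebra_topologicalClosure_eq_top_of_separatesPoints _ hsep
  refine eq_top_iff.2 fun f _ => ?_
  change f ∈ (Submodule.span ℝ (S : Set C(T, ℝ))).topologicalClosure
  rw [hspan]
  exact (SetLike.ext_iff.mp hSW f).mpr trivial

theorem IsTauberWiener.span_outerMulₗ_ridgeFunctions_dense {ψ : ℝ → ℝ} (hψ : IsTauberWiener ψ)
    {T₁ T₂ : Type*} [TopologicalSpace T₁] [TopologicalSpace T₂] [CompactSpace T₁]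
    [CompactSpace T₂] {V₁ : Submodule ℝ C(T₁, ℝ)} {V₂ : Submodule ℝ C(T₂, ℝ)}
    (h₁ : SeparatesPoints ((⇑) '' (V₁ : Set C(T₁, ℝ))))
    (h₂ : SeparatesPoints ((⇑) '' (V₂ : Set C(T₂, ℝ)))) :
    (Submodule.span ℝ (image2 (fun a b => outerMulₗ a b)
      (ridgeFunctions ψ V₁) (ridgeFunctions ψ V₂))).topologicalClosure = ⊤ := by
  let V : Submodule ℝ C(T₁ × T₂, ℝ) :=
    V₁.map (compRightAlgHom ℝ ℝ fst).toLinearMap ⊔ V₂.map (compRightAlgHom ℝ ℝ snd).toLinearMap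
  have hV : SeparatesPoints ((⇑) '' (V : Set C(T₁ × T₂, ℝ))) := by
    rintro ⟨s, t⟩ ⟨s', t'⟩ hne
    by_cases hs : s = s'
    · obtain ⟨_, ⟨v, hv, rfl⟩, hvt⟩ := h₂ fun ht : t = t' => hne (by rw [hs, ht])
      exact ⟨_, ⟨_, Submodule.mem_sup_right (Submodule.mem_map_of_mem hv), rfl⟩, hvt⟩
    · obtain ⟨_, ⟨v, hv, rfl⟩, hvs⟩ := h₁ hs
      exact ⟨_, ⟨_, Submodule.mem_sup_left (Submodule.mem_map_of_mem hv), rfl⟩, hvs⟩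
  rw [eq_top_iff, ← span_realExp_comp_dense V.toAddSubmonoid hV]
  refine Submodule.topologicalClosure_minimal _ ?_ (Submodule.isClosed_topologicalClosure _)
  rw [Submodule.span_le]
  rintro _ ⟨_, hv, rfl⟩
  obtain ⟨_, ⟨v₁, hv₁, rfl⟩, _, ⟨v₂, hv₂, rfl⟩, rfl⟩ := Submodule.mem_sup.mp hv
  rw [SetLike.mem_coe]
  convert outerMulₗ_mem_closure_span (hψ.comp_mem_closure_span_ridgeFunctions hv₁ realExp)
    (hψ.comp_mem_closure_span_ridgeFunctions hv₂ realExp) using 1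
  ext
  simp [realExp, Real.exp_add]

theorem Submodule.exists_fin_sum_eq_of_forall_mem_span_range {R M ι κ : Type*} [Semiring R]
    [AddCommMonoid M] [Module R M] [Fintype κ] {g : ι → M} {ℓ : κ → M}
    (hℓ : ∀ k, ℓ k ∈ Submodule.span R (range g)) :
    ∃ (m : ℕ) (x : Fin m → ι) (ξ : κ → Fin m → R), ∀ k, ℓ k = ∑ j, ξ k j • g (x j) := by
  classical
  choose c hc using fun k => Finsupp.mem_span_range_iff_exists_finsupp.mp (hℓ k)
  let s := Finset.univ.biUnion fun k => (c k).support
  refine ⟨s.card, fun j => s.equivFin.symm j, fun k j => c k (s.equivFin.symm j), fun k => ?_⟩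
  have hsupp : (c k).support ⊆ s :=
    Finset.subset_biUnion_of_mem (fun k => (c k).support) (Finset.mem_univ k)
  rw [← hc k, Finsupp.sum_of_support_subset _ hsupp (fun i a => a • g i) fun _ _ => zero_smul _ _,
    ← Finset.sum_coe_sort s]
  exact (Equiv.sum_comp s.equivFin.symm fun i : s => c k i • g i).symm

section Features

variable {Y : Type*} [TopologicalSpace Y]

def evalOn (U : Set C(Y, ℝ)) (x : Y) : C(U, ℝ) :=
  ⟨fun u => (u : C(Y, ℝ)) x, (continuous_eval_const x).comp continuous_subtype_val⟩

theorem separatesPoints_span_range_evalOn (U : Set C(Y, ℝ)) :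
    SeparatesPoints ((⇑) '' (Submodule.span ℝ (range (evalOn U)) : Set C(U, ℝ))) := by
  intro u v huv
  obtain ⟨x, hx⟩ := DFunLike.ne_iff.mp (Subtype.coe_ne_coe.mpr huv)
  exact ⟨_, ⟨_, Submodule.subset_span ⟨x, rfl⟩, rfl⟩, hx⟩

variable {E : Type*} [NormedAddCommGroup E] [InnerProductSpace ℝ E]

def innerOn (K : Set E) : E →ₗ[ℝ] C(K, ℝ) where
  toFun c := ⟨fun y => ⟪c, y⟫, by fun_prop⟩
  map_add' _ _ := by ext; simp [inner_add_left]
  map_smul' _ _ := by ext; simp [real_inner_smul_left]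

theorem separatesPoints_range_innerOn (K : Set E) :
    SeparatesPoints ((⇑) '' (LinearMap.range (innerOn K) : Set C(K, ℝ))) := by
  intro y z hyz
  refine ⟨_, ⟨_, ⟨(y : E) - z, rfl⟩, rfl⟩, fun h => hyz ?_⟩
  have h0 : ⟪(y : E) - z, (y : E) - z⟫ = 0 := by
    rw [inner_sub_right]
    exact sub_eq_zero.mpr h
  exact Subtype.ext (sub_eq_zero.mp (inner_self_eq_zero.mp h0))

theorem exists_repr_of_mem_span_outerMulₗ {U : Set C(Y, ℝ)} {K : Set E} {ψ : ℝ → ℝ}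
    {g : C(U × K, ℝ)}
    (hg : g ∈ Submodule.span ℝ (image2 (fun a b => outerMulₗ a b)
      (ridgeFunctions ψ (Submodule.span ℝ (range (evalOn U))))
      (ridgeFunctions ψ (LinearMap.range (innerOn K))))) :
    ∃ (N m : ℕ) (a : Fin N → ℝ) (ξ : Fin N → Fin m → ℝ) (θ β : Fin N → ℝ) (c : Fin N → E)
      (x : Fin m → Y), ∀ u y, g (u, y) =
        ∑ k, a k * ψ (∑ j, ξ k j * (u : C(Y, ℝ)) (x j) + θ k) * ψ (⟪c k, (y : E)⟫ + β k) := by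
  obtain ⟨N, a, gk, rfl⟩ := Submodule.mem_span_set'.mp hg
  choose φ hφ χ hχ hgk using fun k => (gk k).2
  choose ℓ hℓ θ hθ using hφ
  choose v hv β hβ using hχ
  choose c hc using hv
  obtain ⟨m, x, ξ, hξ⟩ := Submodule.exists_fin_sum_eq_of_forall_mem_span_range hℓ
  refine ⟨N, m, a, ξ, θ, β, c, x, fun u y => ?_⟩
  simp only [ContinuousMap.coe_sum, ContinuousMap.coe_smul, Finset.sum_apply, Pi.smul_apply,
    smul_eq_mul]
  refine Finset.sum_congr rfl fun k _ => ?_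
  rw [← hgk k, outerMulₗ_apply, hθ, hβ, ← hc, hξ]
  simp [evalOn, innerOn, mul_assoc]

end Features

theorem universal_approximation_for_operators_general
    (ψ : ℝ → ℝ) (hψ : IsTauberWiener ψ)
    {X : Type*} [NormedAddCommGroup X]
    (d : ℕ)
    (K₁ : Set X)
    (K₂ : Set (EuclideanSpace ℝ (Fin d))) (hK₂ : IsCompact K₂)
    (U : Set C(K₁, ℝ)) (hU : IsCompact U)
    (F : U → C(K₂, ℝ)) (hF : Continuous F)
    (ε : ℝ) (hε : 0 < ε) :
    ∃ (N M m : ℕ) (w : Fin N → Fin M → ℝ) (ξ : Fin N → Fin M → Fin m → ℝ)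
      (θ : Fin N → Fin M → ℝ) (β : Fin N → ℝ) (c : Fin N → EuclideanSpace ℝ (Fin d))
      (x : Fin m → K₁),
      ∀ u : U, ∀ y : K₂,
        |F u y - ∑ k, ∑ i, w k i *
            ψ (∑ j, ξ k i j * (u : C(K₁, ℝ)) (x j) + θ k i) *
            ψ (⟪c k, (y : EuclideanSpace ℝ (Fin d))⟫ + β k)| < ε := by
  have := isCompact_iff_compactSpace.mp hU
  have := isCompact_iff_compactSpace.mp hK₂
  let G : C(U × K₂, ℝ) := ContinuousMap.uncurry ⟨F, hF⟩
  have hdense := hψ.span_outerMulₗ_ridgeFunctions_dense (separatesPoints_span_range_evalOn U)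
    (separatesPoints_range_innerOn K₂)
  have hG := (SetLike.ext_iff.mp hdense G).mpr trivial
  obtain ⟨g, hg, hGg⟩ := Metric.mem_closure_iff.mp hG ε hε
  obtain ⟨N, m, a, ξ, θ, β, c, x, hrepr⟩ := exists_repr_of_mem_span_outerMulₗ hg
  refine ⟨N, 1, m, fun k _ => a k, fun k _ => ξ k, fun k _ => θ k, β, c, x, fun u y => ?_⟩
  calc _ = dist (G (u, y)) (g (u, y)) := by simp [G, hrepr, Real.dist_eq]
    _ ≤ dist G g := dist_apply_le_dist _
    _ < ε := hGg

theorem universal_approximation_for_operators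
    (ψ : ℝ → ℝ) (hψ : IsTauberWiener ψ)
    {X : Type*} [NormedAddCommGroup X] [NormedSpace ℝ X] [CompleteSpace X]
    (d : ℕ)
    (K₁ : Set X) (hK₁ : IsCompact K₁)
    (K₂ : Set (EuclideanSpace ℝ (Fin d))) (hK₂ : IsCompact K₂)
    (U : Set C(K₁, ℝ)) (hU : IsCompact U)
    (F : U → C(K₂, ℝ)) (hF : Continuous F)
    (ε : ℝ) (hε : 0 < ε) :
    ∃ (N M m : ℕ) (w : Fin N → Fin M → ℝ) (ξ : Fin N → Fin M → Fin m → ℝ)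
      (θ : Fin N → Fin M → ℝ) (β : Fin N → ℝ) (c : Fin N → EuclideanSpace ℝ (Fin d))
      (x : Fin m → K₁),
      ∀ u : U, ∀ y : K₂,
        |F u y - ∑ k, ∑ i, w k i *
            ψ (∑ j, ξ k i j * (u : C(K₁, ℝ)) (x j) + θ k i) *
            ψ (⟪c k, (y : EuclideanSpace ℝ (Fin d))⟫ + β k)| < ε :=
  universal_approximation_for_operators_general ψ hψ d K₁ K₂ hK₂ U hU F hF ε hε
end

section
/- If ψ : ℝ → ℝ is continuous and is not a polynomial, then ψ is a Tauber–Wiener function; that is, for every compact interval [a,b] ⊂ ℝ, the linear span of the family of functions {x ↦ ψ(ξ x + θ) : ξ, θ ∈ ℝ} is dense in C([a,b]) with respect to the supremum norm. -/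
open MeasureTheory Filter Polynomial
open scoped Topology Convolution ContDiff
open ContinuousLinearMap (lsmul)

theorem Submodule.integral_mem_of_isClosed {α E : Type*} [MeasurableSpace α] {μ : Measure α}
    [NormedAddCommGroup E] [NormedSpace ℝ E] {V : Submodule ℝ E} (hV : IsClosed (V : Set E))
    {F : α → E} (hF : ∀ a, F a ∈ V) : ∫ a, F a ∂μ ∈ V := by
  by_cases hE : CompleteSpace E
  · have : CompleteSpace V := hV.completeSpace_coe
    convert (∫ a, (⟨F a, hF a⟩ : V) ∂μ).2 using 1
    exact V.subtypeₗᵢ.integral_comp_comm (μ := μ) fun a => (⟨F a, hF a⟩ : V)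
  · simp [integral, hE, V.zero_mem]

theorem Submodule.mem_of_hasDerivAt {E : Type*} [NormedAddCommGroup E] [NormedSpace ℝ E]
    {V : Submodule ℝ E} (hV : IsClosed (V : Set E)) {c : ℝ → E} {c' : E} {t : ℝ}
    (hc : HasDerivAt c c' t) (hmem : ∀ s, c s ∈ V) : c' ∈ V :=
  hV.mem_of_tendsto (hasDerivAt_iff_tendsto_slope.mp hc) <| Eventually.of_forall fun s => by
    rw [slope_def_module]
    exact V.smul_mem _ (V.sub_mem (hmem s) (hmem t))

theorem ContinuousMap.hasDerivAt_of_hasDerivAt_apply {X E : Type*} [TopologicalSpace X]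
    [CompactSpace X] [NormedAddCommGroup E] [NormedSpace ℝ E] [CompleteSpace E]
    {c c' : ℝ → C(X, E)} (hc' : Continuous c')
    (hc : ∀ t x, HasDerivAt (fun t => c t x) (c' t x) t) (t : ℝ) : HasDerivAt c (c' t) t := by
  have hint : ∀ t, c t = c 0 + ∫ τ in 0..t, c' τ := fun t => by
    ext x
    have hx : Continuous fun τ => c' τ x := (continuous_eval_const x).comp hc'
    have heval := (ContinuousMap.evalCLM ℝ x).intervalIntegral_comp_comm
      (hc'.intervalIntegrable (μ := volume) 0 t)
    simp only [ContinuousMap.evalCLM_apply] at heval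
    rw [ContinuousMap.add_apply, ← heval, intervalIntegral.integral_eq_sub_of_hasDerivAt
      (fun τ _ => hc τ x) (hx.intervalIntegrable 0 t)]
    abel
  rw [funext hint]
  exact (hc'.integral_hasStrictDerivAt 0 t).hasDerivAt.const_add _

noncomputable def degreeLTFunctions (k : ℕ) : Submodule ℝ (ℝ → ℝ) :=
  (degreeLT ℝ k).map (LinearMap.pi fun x => leval x)

theorem mem_degreeLTFunctions {k : ℕ} {f : ℝ → ℝ} :
    f ∈ degreeLTFunctions k ↔ ∃ p ∈ degreeLT ℝ k, ∀ x, p.eval x = f x := by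
  simp [degreeLTFunctions, funext_iff]

theorem isClosed_degreeLTFunctions (k : ℕ) : IsClosed (degreeLTFunctions k : Set (ℝ → ℝ)) :=
  have : FiniteDimensional ℝ (degreeLT ℝ k) := (degreeLTEquiv ℝ k).symm.finiteDimensional
  have : FiniteDimensional ℝ (degreeLTFunctions k) := Module.Finite.map _ _
  Submodule.closed_of_finiteDimensional _

theorem mem_degreeLTFunctions_of_iteratedDeriv_eq_zero {k : ℕ} {f : ℝ → ℝ}
    (hf : ContDiff ℝ k f) (h : ∀ x, iteratedDeriv k f x = 0) : f ∈ degreeLTFunctions k := by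
  rw [mem_degreeLTFunctions]
  refine ⟨∑ i ∈ Finset.range k, C (iteratedDeriv i f 0 / i.factorial) * X ^ i, ?_, fun x => ?_⟩
  · exact Submodule.sum_mem _ fun i hi => by
      rw [mem_degreeLT]
      exact (degree_C_mul_X_pow_le _ _).trans_lt (by exact_mod_cast Finset.mem_range.mp hi)
  cases k with
  | zero => simpa using (h x).symm
  | succ n =>
    rcases eq_or_ne x 0 with rfl | hx
    · simp [Finset.sum_range_succ', eval_finsetSum]
    obtain ⟨x', -, hx'⟩ := taylor_mean_remainder_lagrange_iteratedDeriv hx.symm hf.contDiffOn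
    rw [h, zero_mul, zero_div, sub_eq_zero, taylor_within_apply] at hx'
    rw [hx', eval_finsetSum]
    refine Finset.sum_congr rfl fun i hi => ?_
    rw [iteratedDerivWithin_eq_iteratedDeriv (uniqueDiffOn_uIcc hx.symm) _ Set.left_mem_uIcc]
    · simp only [eval_mul, eval_C, eval_pow, eval_X, sub_zero, smul_eq_mul]
      ring
    · exact hf.contDiffAt.of_le (by exact_mod_cast (Finset.mem_range.mp hi).le)

theorem exists_iteratedDeriv_bump_convolution_ne_zero {ψ : ℝ → ℝ} (hψ : Continuous ψ)
    (hpoly : ¬ ∃ p : ℝ[X], ∀ x, ψ x = p.eval x) (k : ℕ) :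
    ∃ (b : ContDiffBump (0 : ℝ)) (θ : ℝ),
      iteratedDeriv k (b.normed volume ⋆[lsmul ℝ ℝ] ψ) θ ≠ 0 := by
  by_contra! H
  let b : ℕ → ContDiffBump (0 : ℝ) := fun n =>
    ⟨1 / ((n : ℝ) + 1) / 2, 1 / ((n : ℝ) + 1), by positivity, half_lt_self (by positivity)⟩
  have hb : Tendsto (fun n => (b n).rOut) atTop (𝓝 0) := tendsto_one_div_add_atTop_nhds_zero_nat
  have hmem : ∀ n, (b n).normed volume ⋆[lsmul ℝ ℝ] ψ ∈ degreeLTFunctions k := fun n =>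
    mem_degreeLTFunctions_of_iteratedDeriv_eq_zero
      ((b n).hasCompactSupport_normed.contDiff_convolution_left _ (b n).contDiff_normed
        hψ.locallyIntegrable) (H (b n))
  obtain ⟨p, -, hp⟩ := mem_degreeLTFunctions.mp <| (isClosed_degreeLTFunctions k).mem_of_tendsto
    (tendsto_pi_nhds.mpr fun x => ContDiffBump.convolution_tendsto_right_of_continuous hb hψ x)
    (Eventually.of_forall hmem)
  exact hpoly ⟨p, fun x => (hp x).symm⟩

section Ridge

/- `∃ f ∈ V, ∀ x : s, f x = u x` says that the continuous function `u` lies in `V`, without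
bundling `u` with a continuity proof. -/
variable {s : Set ℝ} {V : Submodule ℝ C(s, ℝ)}

theorem toContinuousMapOn_mem_of_pow_mem (hmono : ∀ k : ℕ, ∃ f ∈ V, ∀ x : s, f x = x ^ k)
    (p : ℝ[X]) : p.toContinuousMapOn s ∈ V := by
  induction p using Polynomial.induction_on' with
  | add p q hp hq =>
    convert V.add_mem hp hq
    ext x
    simp
  | monomial k c =>
    obtain ⟨f, hf, hfx⟩ := hmono k
    convert V.smul_mem c hf
    ext x
    simp [hfx]

variable [CompactSpace s]

theorem convolution_ridge_mem (hV : IsClosed (V : Set C(s, ℝ))) {φ ψ : ℝ → ℝ}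
    (hφ : Continuous φ) (hφc : HasCompactSupport φ) (hψ : Continuous ψ)
    (hridge : ∀ ξ θ, ∃ f ∈ V, ∀ x : s, f x = ψ (ξ * x + θ)) (ξ θ : ℝ) :
    ∃ f ∈ V, ∀ x : s, f x = (φ ⋆[lsmul ℝ ℝ] ψ) (ξ * x + θ) := by
  let G : C(ℝ × s, ℝ) := ⟨fun p => ψ (ξ * p.2 + (θ - p.1)), by fun_prop⟩
  let F : ℝ → C(s, ℝ) := fun t => φ t • G.curry t
  have hG : ∀ t, G.curry t ∈ V := fun t => by
    obtain ⟨f, hf, hfx⟩ := hridge ξ (θ - t)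
    convert hf
    ext x
    exact (hfx x).symm
  have hF : Integrable F := (hφ.smul G.curry.continuous).integrable_of_hasCompactSupport
    hφc.smul_right
  refine ⟨∫ t, F t, V.integral_mem_of_isClosed hV fun t => V.smul_mem _ (hG t), fun x => ?_⟩
  rw [← ContinuousMap.evalCLM_apply ℝ x, ← (ContinuousMap.evalCLM ℝ x).integral_comp_comm hF,
    convolution_def]
  simp only [map_smul, ContinuousMap.evalCLM_apply, ContinuousMap.curry_apply,
    ContinuousMap.coe_mk, smul_eq_mul, ContinuousLinearMap.lsmul_apply, F, G]
  ring_nf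

theorem pow_mul_iteratedDeriv_ridge_mem (hV : IsClosed (V : Set C(s, ℝ))) {g : ℝ → ℝ}
    (hg : ContDiff ℝ ∞ g) (hridge : ∀ ξ θ, ∃ f ∈ V, ∀ x : s, f x = g (ξ * x + θ))
    (k : ℕ) (ξ θ : ℝ) : ∃ f ∈ V, ∀ x : s, f x = x ^ k * iteratedDeriv k g (ξ * x + θ) := by
  induction k generalizing ξ with
  | zero => simpa using hridge ξ θ
  | succ k ih =>
    choose c hcV hc using ih
    have hcont' := hg.continuous_iteratedDeriv (k + 1) (by exact_mod_cast le_top)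
    let c' : C(ℝ × s, ℝ) :=
      ⟨fun p => p.2 ^ (k + 1) * iteratedDeriv (k + 1) g (p.1 * p.2 + θ), by fun_prop⟩
    have hD : ∀ y, HasDerivAt (iteratedDeriv k g) (iteratedDeriv (k + 1) g y) y := fun y => by
      rw [iteratedDeriv_succ]
      exact (hg.differentiable_iteratedDeriv k
        (by exact_mod_cast WithTop.coe_lt_top _) y).hasDerivAt
    have hderiv : ∀ t x, HasDerivAt (fun t => c t x) (c'.curry t x) t := fun t x => by
      simp_rw [hc]
      exact (((hD _).comp t ((hasDerivAt_mul_const (x : ℝ)).add_const θ)).const_mul _).congr_deriv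
        (by show _ = (x : ℝ) ^ (k + 1) * _; ring)
    exact ⟨c'.curry ξ, V.mem_of_hasDerivAt hV
      (ContinuousMap.hasDerivAt_of_hasDerivAt_apply c'.curry.continuous hderiv ξ) hcV,
      fun x => rfl⟩

theorem exists_pow_mem_of_ridge_mem (hV : IsClosed (V : Set C(s, ℝ))) {ψ : ℝ → ℝ}
    (hψ : Continuous ψ) (hpoly : ¬ ∃ p : ℝ[X], ∀ x, ψ x = p.eval x)
    (hridge : ∀ ξ θ, ∃ f ∈ V, ∀ x : s, f x = ψ (ξ * x + θ)) (k : ℕ) :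
    ∃ f ∈ V, ∀ x : s, f x = x ^ k := by
  obtain ⟨b, θ, hne⟩ := exists_iteratedDeriv_bump_convolution_ne_zero hψ hpoly k
  obtain ⟨f, hf, hfx⟩ := pow_mul_iteratedDeriv_ridge_mem hV
    (b.hasCompactSupport_normed.contDiff_convolution_left _ b.contDiff_normed hψ.locallyIntegrable)
    (convolution_ridge_mem hV (b.continuous_normed (μ := volume)) b.hasCompactSupport_normed hψ
      hridge) k 0 θ
  refine ⟨(iteratedDeriv k (b.normed volume ⋆[lsmul ℝ ℝ] ψ) θ)⁻¹ • f, V.smul_mem _ hf,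
    fun x => ?_⟩
  rw [ContinuousMap.smul_apply, hfx, zero_mul, zero_add, smul_eq_mul, mul_left_comm,
    inv_mul_cancel₀ hne, mul_one]

end Ridge

noncomputable def ridgeSpan (s : Set ℝ) (ψ : ℝ → ℝ) : Submodule ℝ C(s, ℝ) :=
  (Submodule.span ℝ {f | ∃ ξ θ : ℝ, ∀ x : s, f x = ψ (ξ * x + θ)}).topologicalClosure

theorem ridgeSpan_eq_top {s : Set ℝ} [CompactSpace s] {ψ : ℝ → ℝ} (hψ : Continuous ψ)
    (hpoly : ¬ ∃ p : ℝ[X], ∀ x, ψ x = p.eval x) : ridgeSpan s ψ = ⊤ := by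
  have hV : IsClosed (ridgeSpan s ψ : Set C(s, ℝ)) := Submodule.isClosed_topologicalClosure _
  have hridge : ∀ ξ θ, ∃ f ∈ ridgeSpan s ψ, ∀ x : s, f x = ψ (ξ * x + θ) := fun ξ θ =>
    ⟨⟨fun x => ψ (ξ * x + θ), by fun_prop⟩,
      Submodule.le_topologicalClosure _ (Submodule.subset_span ⟨ξ, θ, fun _ => rfl⟩), fun _ => rfl⟩
  have hpolys := toContinuousMapOn_mem_of_pow_mem (exists_pow_mem_of_ridge_mem hV hψ hpoly hridge)
  have hsub : (polynomialFunctions s : Set C(s, ℝ)) ⊆ ridgeSpan s ψ := by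
    rintro _ ⟨p, -, rfl⟩
    exact hpolys p
  refine eq_top_iff.mpr fun f _ => closure_minimal hsub hV ?_
  rw [← Subalgebra.topologicalClosure_coe, polynomialFunctions.topologicalClosure]
  trivial

theorem exists_sum_near_of_mem_ridgeSpan {s : Set ℝ} [CompactSpace s] {ψ : ℝ → ℝ}
    {f : C(s, ℝ)} (hf : f ∈ ridgeSpan s ψ) {ε : ℝ} (hε : 0 < ε) :
    ∃ (N : ℕ) (w ξ θ : Fin N → ℝ), ∀ x : s, |f x - ∑ i, w i * ψ (ξ i * x + θ i)| < ε := by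
  rw [ridgeSpan, ← SetLike.mem_coe, Submodule.topologicalClosure_coe,
    Metric.mem_closure_iff] at hf
  obtain ⟨g, hg, hfg⟩ := hf ε hε
  obtain ⟨N, w, gen, rfl⟩ := Submodule.mem_span_set'.mp hg
  choose ξ θ hgen using fun i => (gen i).2
  refine ⟨N, w, ξ, θ, fun x => ?_⟩
  calc |f x - ∑ i, w i * ψ (ξ i * x + θ i)|
      = dist (f x) ((∑ i, w i • (gen i : C(s, ℝ))) x) := by simp [Real.dist_eq, hgen]
    _ ≤ dist f (∑ i, w i • (gen i : C(s, ℝ))) := ContinuousMap.dist_apply_le_dist x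
    _ < ε := hfg

theorem continuous_nonpolynomial_is_TauberWiener
    (ψ : ℝ → ℝ) (hcont : Continuous ψ)
    (hnotpoly : ¬ ∃ p : Polynomial ℝ, ∀ x : ℝ, ψ x = p.eval x) :
    IsTauberWiener ψ := by
  refine ⟨hcont, fun a b f hf ε hε => ?_⟩
  have hmem : (⟨_, hf.domRestrict⟩ : C(Set.Icc a b, ℝ)) ∈ ridgeSpan (Set.Icc a b) ψ := by
    rw [ridgeSpan_eq_top hcont hnotpoly]
    exact Submodule.mem_top
  obtain ⟨N, w, ξ, θ, hnear⟩ := exists_sum_near_of_mem_ridgeSpan hmem hε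
  exact ⟨N, w, ξ, θ, fun x hx => hnear ⟨x, hx⟩⟩
end

section
/- Fix d, N ∈ ℕ with N ≥ 1, a nonzero vector x ∈ ℝ^d, and ε ∈ (0,1). Let μ be the probability measure on the space of N × d real matrices given by the product of standard Gaussian measures N(0,1), one for each entry (i.e., the entries R_{ji} are i.i.d. standard normal random variables). For a matrix R define z = (1/√N) R x ∈ ℝ^N. Then μ( { R : | ‖x‖₂ − ‖z‖₂ | ≤ ε ‖x‖₂ } ) ≥ 1 − 2 exp( −(ε² − ε³) N / 4 ). -/
/-!
Write `u = x / ‖x‖`. The coordinates `Y j = ⟪R j, u⟫` are i.i.d. standard Gaussians (the standard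
Gaussian on `ℝ^d` is rotation invariant) and `‖z‖² = ‖x‖² · (∑ j, Y j ²) / N`, so it suffices to
show that the chi-squared variable `S = ∑ j, Y j ²` lies in `[(1 - ε) N, (1 + ε) N]` with the
stated probability: then `‖z‖²` lies between `(1 ∓ ε) ‖x‖²`, whence `|‖x‖ - ‖z‖| ≤ ε ‖x‖`.
Since `𝔼 exp (t S) = (1 - 2t)^(-N/2)`, the Chernoff bound at the optimal parameters
`1 - 2t = (1 ± ε)⁻¹` bounds the two tails by `(1 + ε)^(N/2) e^(-εN/2)` and
`(1 - ε)^(N/2) e^(εN/2)`, and `log (1 + ε) ≤ ε - ε²/2 + ε³/2`, `log (1 - ε) ≤ -ε - ε²/2` turn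
both into `exp (-(ε² - ε³) N / 4)`.
-/

open scoped BigOperators
open ProbabilityTheory MeasureTheory Real

lemma gaussianPDFReal_zero_one_mul_exp_mul_sq (t y : ℝ) :
    gaussianPDFReal 0 1 y * exp (t * y ^ 2) = (√(2 * π))⁻¹ * exp (-(1 / 2 - t) * y ^ 2) := by
  rw [gaussianPDFReal_def, mul_assoc, ← exp_add]
  congr 2
  · simp
  · simp; ring

lemma integrable_exp_mul_sq_gaussianReal {t : ℝ} (ht : t < 1 / 2) :
    Integrable (fun y => exp (t * y ^ 2)) (gaussianReal 0 1) := by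
  rw [gaussianReal_of_var_ne_zero 0 one_ne_zero,
    integrable_withDensity_iff_integrable_smul' (measurable_gaussianPDF 0 1)
      (ae_of_all _ fun _ => gaussianPDF_lt_top)]
  simp_rw [gaussianPDF, ENNReal.toReal_ofReal (gaussianPDFReal_nonneg _ _ _), smul_eq_mul,
    gaussianPDFReal_zero_one_mul_exp_mul_sq]
  exact (integrable_exp_neg_mul_sq (by linarith)).const_mul _

/-- For `t ≥ 1 / 2` both sides are junk `0`: the integrand is not integrable and `√` of a negative
number is `0`. -/
lemma mgf_sq_gaussianReal (t : ℝ) :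
    mgf (fun y => y ^ 2) (gaussianReal 0 1) t = (√(1 - 2 * t))⁻¹ := by
  rw [mgf, integral_gaussianReal_eq_integral_smul one_ne_zero]
  simp_rw [smul_eq_mul, gaussianPDFReal_zero_one_mul_exp_mul_sq, integral_const_mul,
    integral_gaussian, ← sqrt_inv, ← sqrt_mul (inv_nonneg.2 (by positivity : (0 : ℝ) ≤ 2 * π))]
  congr 1
  field_simp

lemma one_add_le_exp_cubic {ε : ℝ} (hε : 0 ≤ ε) : 1 + ε ≤ exp (ε - ε ^ 2 / 2 + ε ^ 3 / 2) := by
  have hu : 0 ≤ ε - ε ^ 2 / 2 + ε ^ 3 / 2 := by nlinarith [sq_nonneg (ε - 1 / 2)]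
  refine le_trans ?_ (quadratic_le_exp_of_nonneg hu)
  nlinarith [sq_nonneg (ε * (ε - 1)), sq_nonneg ε, pow_nonneg hε 3]

lemma one_sub_le_exp_quadratic {ε : ℝ} (hε₀ : 0 ≤ ε) (hε₁ : ε < 1) :
    1 - ε ≤ exp (-ε - ε ^ 2 / 2) := by
  have hlog := sum_le_hasSum (Finset.range 2) (fun i _ => by positivity)
    (hasSum_pow_div_log_of_abs_lt_one (abs_lt.2 ⟨by linarith, hε₁⟩))
  rw [← log_le_iff_le_exp (by linarith)]
  norm_num [Finset.sum_range_succ] at hlog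
  linarith

lemma sqrt_pow_le_exp {a b : ℝ} (h : a ≤ exp b) (n : ℕ) : √a ^ n ≤ exp (b * n / 2) := by
  calc √a ^ n ≤ √(exp b) ^ n := by gcongr
    _ = exp (b * n / 2) := by rw [sqrt_eq_rpow, ← exp_mul, ← exp_nat_mul]; ring_nf

lemma abs_sub_le_mul_of_sq_le_of_le_sq {a b ε : ℝ} (ha : 0 ≤ a) (hb : 0 ≤ b) (hε : 0 ≤ ε)
    (hlow : (1 - ε) * a ^ 2 ≤ b ^ 2) (hup : b ^ 2 ≤ (1 + ε) * a ^ 2) : |a - b| ≤ ε * a := by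
  rw [abs_le]
  constructor
  · nlinarith [mul_nonneg hε ha, mul_nonneg (mul_nonneg hε hε) (sq_nonneg a)]
  · nlinarith [mul_nonneg hε ha, mul_nonneg (mul_nonneg hε hε) (sq_nonneg a)]

section

variable {ι : Type*} [Fintype ι]

lemma integrable_exp_mul_sum_sq_pi_gaussianReal {t : ℝ} (ht : t < 1 / 2) :
    Integrable (fun y : ι → ℝ => exp (t * ∑ i, y i ^ 2))
      (Measure.pi fun _ => gaussianReal 0 1) := by
  simp_rw [Finset.mul_sum, exp_sum]
  exact Integrable.fintype_prod fun _ => integrable_exp_mul_sq_gaussianReal ht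

lemma mgf_sum_sq_pi_gaussianReal (t : ℝ) :
    mgf (fun y : ι → ℝ => ∑ i, y i ^ 2) (Measure.pi fun _ => gaussianReal 0 1) t
      = (√(1 - 2 * t))⁻¹ ^ Fintype.card ι := by
  simp_rw [mgf, Finset.mul_sum, exp_sum]
  rw [integral_fintype_prod_eq_prod (fun _ y => exp (t * y ^ 2))]
  change ∏ _i : ι, mgf (fun y => y ^ 2) (gaussianReal 0 1) t = _
  rw [mgf_sq_gaussianReal t, Finset.prod_const, Finset.card_univ]

lemma measureReal_sum_sq_ge_le_exp {ε : ℝ} (hε : 0 ≤ ε) :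
    (Measure.pi fun _ : ι => gaussianReal 0 1).real
        {y | (1 + ε) * Fintype.card ι ≤ ∑ i, y i ^ 2}
      ≤ exp (-(ε ^ 2 - ε ^ 3) * Fintype.card ι / 4) := by
  set n := Fintype.card ι
  set t := ε / (2 * (1 + ε)) with ht_def
  have ht : t < 1 / 2 := by rw [div_lt_iff₀ (by positivity)]; linarith
  have h2t : 1 - 2 * t = (1 + ε)⁻¹ := by rw [ht_def]; field_simp; ring
  calc _ ≤ exp (-t * ((1 + ε) * n)) * mgf (fun y : ι → ℝ => ∑ i, y i ^ 2)
          (Measure.pi fun _ => gaussianReal 0 1) t :=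
        measure_ge_le_exp_mul_mgf _ (by positivity) (integrable_exp_mul_sum_sq_pi_gaussianReal ht)
    _ = exp (-(ε * n / 2)) * √(1 + ε) ^ n := by
        rw [mgf_sum_sq_pi_gaussianReal t, h2t, sqrt_inv, inv_inv]
        congr 2
        rw [ht_def]
        field_simp
    _ ≤ exp (-(ε * n / 2)) * exp ((ε - ε ^ 2 / 2 + ε ^ 3 / 2) * n / 2) := by
        gcongr
        exact sqrt_pow_le_exp (one_add_le_exp_cubic hε) n
    _ = exp (-(ε ^ 2 - ε ^ 3) * n / 4) := by rw [← exp_add]; ring_nf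

lemma measureReal_sum_sq_le_le_exp {ε : ℝ} (hε₀ : 0 ≤ ε) (hε₁ : ε < 1) :
    (Measure.pi fun _ : ι => gaussianReal 0 1).real
        {y | ∑ i, y i ^ 2 ≤ (1 - ε) * Fintype.card ι}
      ≤ exp (-(ε ^ 2 - ε ^ 3) * Fintype.card ι / 4) := by
  set n := Fintype.card ι
  set t := -(ε / (2 * (1 - ε))) with ht_def
  have hε₁' : 0 < 1 - ε := by linarith
  have ht : t ≤ 0 := neg_nonpos.2 (by positivity)
  have h2t : 1 - 2 * t = (1 - ε)⁻¹ := by rw [ht_def]; field_simp; ring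
  calc _ ≤ exp (-t * ((1 - ε) * n)) * mgf (fun y : ι → ℝ => ∑ i, y i ^ 2)
          (Measure.pi fun _ => gaussianReal 0 1) t :=
        measure_le_le_exp_mul_mgf _ ht
          (integrable_exp_mul_sum_sq_pi_gaussianReal (by linarith))
    _ = exp (ε * n / 2) * √(1 - ε) ^ n := by
        rw [mgf_sum_sq_pi_gaussianReal t, h2t, sqrt_inv, inv_inv]
        congr 2
        rw [ht_def]
        field_simp
    _ ≤ exp (ε * n / 2) * exp ((-ε - ε ^ 2 / 2) * n / 2) := by
        gcongr
        exact sqrt_pow_le_exp (one_sub_le_exp_quadratic hε₀ hε₁) n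
    _ ≤ exp (-(ε ^ 2 - ε ^ 3) * n / 4) := by
        rw [← exp_add, exp_le_exp]
        nlinarith [pow_nonneg hε₀ 3, (Nat.cast_nonneg n : (0 : ℝ) ≤ n)]

lemma one_sub_two_exp_le_measure_sum_sq_mem_Icc {ε : ℝ} (hε₀ : 0 ≤ ε) (hε₁ : ε < 1) :
    ENNReal.ofReal (1 - 2 * exp (-(ε ^ 2 - ε ^ 3) * Fintype.card ι / 4)) ≤
      (Measure.pi fun _ : ι => gaussianReal 0 1)
        {y | ∑ i, y i ^ 2 ∈ Set.Icc ((1 - ε) * Fintype.card ι) ((1 + ε) * Fintype.card ι)} := by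
  set ν := Measure.pi fun _ : ι => gaussianReal 0 1
  set n : ℝ := (Fintype.card ι : ℝ)
  have hmeas : MeasurableSet {y : ι → ℝ | ∑ i, y i ^ 2 ∈ Set.Icc ((1 - ε) * n) ((1 + ε) * n)} :=
    measurableSet_Icc.preimage (by fun_prop)
  have htails : {y : ι → ℝ | ∑ i, y i ^ 2 ∈ Set.Icc ((1 - ε) * n) ((1 + ε) * n)}ᶜ ⊆
      {y | ∑ i, y i ^ 2 ≤ (1 - ε) * n} ∪ {y | (1 + ε) * n ≤ ∑ i, y i ^ 2} := by
    intro y hy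
    simp only [Set.mem_compl_iff, Set.mem_ofPred_eq, Set.mem_Icc, not_and_or, not_le] at hy
    exact hy.imp le_of_lt le_of_lt
  refine ENNReal.ofReal_le_of_le_toReal ?_
  rw [← measureReal_def]
  linarith [probReal_compl_eq_one_sub (μ := ν) hmeas, measureReal_mono (μ := ν) htails,
    measureReal_union_le (μ := ν) {y | ∑ i, y i ^ 2 ≤ (1 - ε) * n}
      {y | (1 + ε) * n ≤ ∑ i, y i ^ 2},
    measureReal_sum_sq_ge_le_exp (ι := ι) hε₀, measureReal_sum_sq_le_le_exp (ι := ι) hε₀ hε₁]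

lemma map_pi_gaussianReal_sum_mul (w : EuclideanSpace ℝ ι) :
    (Measure.pi fun _ : ι => gaussianReal 0 1).map (fun r => ∑ i, r i * w i)
      = gaussianReal 0 (‖w‖₊ ^ 2) := by
  have h : (fun r : ι → ℝ => ∑ i, r i * w i) = innerSL ℝ w ∘ WithLp.toLp 2 := by
    ext r
    simp [PiLp.inner_apply, mul_comm]
  rw [h, ← Measure.map_map (by fun_prop) (by fun_prop), map_pi_eq_stdGaussian,
    IsGaussian.map_eq_gaussianReal, integral_strongDual_stdGaussian, variance_dual_stdGaussian,
    innerSL_apply_norm]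
  congr
  ext
  simp

lemma map_pi_pi_gaussianReal_sum_mul {κ : Type*} [Fintype κ] {u : EuclideanSpace ℝ ι}
    (hu : ‖u‖ = 1) :
    (Measure.pi fun _ : κ => Measure.pi fun _ : ι => gaussianReal 0 1).map
        (fun R j => ∑ i, R j i * u i) = Measure.pi fun _ : κ => gaussianReal 0 1 := by
  have hu' : ‖u‖₊ = 1 := NNReal.coe_eq_one.1 hu
  refine (Measure.pi_map_pi (f := fun _ (r : ι → ℝ) => ∑ i, r i * u i)
    fun _ => (by fun_prop : Measurable _).aemeasurable).trans ?_
  simp_rw [map_pi_gaussianReal_sum_mul, hu', one_pow]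

lemma norm_sq_projection (N : ℕ) (R : Fin N → ι → ℝ) (x : EuclideanSpace ℝ ι) :
    ‖(WithLp.equiv 2 (Fin N → ℝ)).symm (fun j => (1 / √N) * ∑ i, R j i * x i)‖ ^ 2
      = ‖x‖ ^ 2 * (∑ j, (∑ i, R j i * (‖x‖⁻¹ • x) i) ^ 2) / N := by
  have hrow : ∀ j, ∑ i, R j i * x i = ‖x‖ * ∑ i, R j i * (‖x‖⁻¹ • x) i := fun j => by
    rcases eq_or_ne x 0 with rfl | hx
    · simp
    · rw [Finset.mul_sum]
      refine Finset.sum_congr rfl fun i _ => ?_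
      rw [PiLp.smul_apply, smul_eq_mul]
      field_simp
  rw [WithLp.equiv_symm_apply, EuclideanSpace.real_norm_sq_eq, Finset.mul_sum, Finset.sum_div]
  refine Finset.sum_congr rfl fun j _ => ?_
  rw [PiLp.toLp_apply, hrow, mul_pow, mul_pow, div_pow, sq_sqrt (Nat.cast_nonneg _)]
  ring

lemma abs_norm_sub_norm_projection_le {N : ℕ} (hN : 1 ≤ N) {ε : ℝ} (hε : 0 ≤ ε)
    (x : EuclideanSpace ℝ ι) {R : Fin N → ι → ℝ}
    (hR : ∑ j, (∑ i, R j i * (‖x‖⁻¹ • x) i) ^ 2 ∈ Set.Icc ((1 - ε) * N) ((1 + ε) * N)) :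
    |‖x‖ - ‖(WithLp.equiv 2 (Fin N → ℝ)).symm (fun j => (1 / √N) * ∑ i, R j i * x i)‖|
      ≤ ε * ‖x‖ := by
  have hN₀ : (0 : ℝ) < N := by exact_mod_cast hN
  refine abs_sub_le_mul_of_sq_le_of_le_sq (norm_nonneg _) (norm_nonneg _) hε ?_ ?_
  · rw [norm_sq_projection, le_div_iff₀ hN₀]; nlinarith [hR.1, sq_nonneg ‖x‖]
  · rw [norm_sq_projection, div_le_iff₀ hN₀]; nlinarith [hR.2, sq_nonneg ‖x‖]

end

theorem JL_gaussian_concentration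
    (d N : ℕ) (hN : 1 ≤ N)
    (x : EuclideanSpace ℝ (Fin d)) (hx : x ≠ 0)
    (ε : ℝ) (hε : ε ∈ Set.Ioo (0 : ℝ) 1)
    (μ : Measure (Fin N → Fin d → ℝ))
    (hμ : μ = Measure.pi fun _ : Fin N => Measure.pi fun _ : Fin d => gaussianReal 0 1) :
    ENNReal.ofReal (1 - 2 * Real.exp (-(ε ^ 2 - ε ^ 3) * N / 4)) ≤
      μ {R : Fin N → Fin d → ℝ |
          |‖x‖ - ‖(WithLp.equiv 2 (Fin N → ℝ)).symm
              (fun j => (1 / Real.sqrt N) * ∑ i, R j i * x i)‖| ≤ ε * ‖x‖} := by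
  obtain ⟨hε₀, hε₁⟩ := hε
  set Y : (Fin N → Fin d → ℝ) → Fin N → ℝ := fun R j => ∑ i, R j i * (‖x‖⁻¹ • x) i
  have hY : μ.map Y = Measure.pi fun _ => gaussianReal 0 1 :=
    hμ ▸ map_pi_pi_gaussianReal_sum_mul (norm_smul_inv_norm hx)
  calc ENNReal.ofReal (1 - 2 * Real.exp (-(ε ^ 2 - ε ^ 3) * N / 4))
      ≤ (Measure.pi fun _ : Fin N => gaussianReal 0 1)
          {y | ∑ j, y j ^ 2 ∈ Set.Icc ((1 - ε) * N) ((1 + ε) * N)} := by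
        simpa using one_sub_two_exp_le_measure_sum_sq_mem_Icc (ι := Fin N) hε₀.le hε₁
    _ = μ (Y ⁻¹' {y | ∑ j, y j ^ 2 ∈ Set.Icc ((1 - ε) * N) ((1 + ε) * N)}) := by
        rw [← hY]
        exact Measure.map_apply (by fun_prop) (measurableSet_Icc.preimage (by fun_prop))
    _ ≤ _ := measure_mono fun _ hR => abs_norm_sub_norm_projection_le hN hε₀.le x hR
end

section
/- Let d, N ∈ ℕ with N ≥ 1, let p be a probability measure on ℝ^d, and define K : ℝ^d → ℝ by K(Δ) = ∫_{ℝ^d} cos(α · Δ) dp(α). For α_1, …, α_N ∈ ℝ^d and u ∈ ℝ^d define φ_N(u) = (1/√N) · ( cos(α_1 · u), …, cos(α_N · u), sin(α_1 · u), …, sin(α_N · u) ) ∈ ℝ^{2N}. Then for every fixed u, v ∈ ℝ^d and every ε > 0, the probability with respect to p^{⊗N} of the event { (α_1, …, α_N) : | ⟨φ_N(u), φ_N(v)⟩ − K(u − v) | ≥ ε } is at most 2 exp( − N ε² / 2 ). -/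
/-!
By `cos (x - y) = cos x cos y + sin x sin y`, `⟪φ_N(u), φ_N(v)⟫` is the empirical mean of the
`N` i.i.d. variables `cos (α_k · (u - v))`, which take values in `[-1, 1]` and have mean
`K (u - v)`. By Hoeffding's lemma each centred term is sub-Gaussian with parameter `1`, so by
independence their sum is sub-Gaussian with parameter `N`, and the Chernoff bound on both tails
at level `N ε` gives `2 exp (-(N ε)² / (2 N))`.
-/

open scoped BigOperators RealInnerProductSpace
open MeasureTheory

/-- The random Fourier feature map `φ_N(u) = (1/√N)(cos(α₁·u),…,cos(α_N·u),sin(α₁·u),…,sin(α_N·u))`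
viewed as a vector of `ℝ^{2N}` (indexed by `Fin N ⊕ Fin N`). -/
noncomputable def rff {d N : ℕ} (α : Fin N → EuclideanSpace ℝ (Fin d))
    (u : EuclideanSpace ℝ (Fin d)) : EuclideanSpace ℝ (Fin N ⊕ Fin N) :=
  (WithLp.equiv 2 (Fin N ⊕ Fin N → ℝ)).symm
    (Sum.elim (fun k => (1 / Real.sqrt N) * Real.cos ⟪α k, u⟫)
      (fun k => (1 / Real.sqrt N) * Real.sin ⟪α k, u⟫))

namespace ProbabilityTheory

open Real

variable {Ω : Type*} [MeasurableSpace Ω]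

lemma HasSubgaussianMGF.measureReal_abs_ge_le {X : Ω → ℝ} {c : NNReal} {μ : Measure Ω}
    (h : HasSubgaussianMGF X c μ) {ε : ℝ} (hε : 0 ≤ ε) :
    μ.real {ω | ε ≤ |X ω|} ≤ 2 * exp (-ε ^ 2 / (2 * c)) := by
  have hsplit : {ω | ε ≤ |X ω|} = {ω | ε ≤ X ω} ∪ {ω | ε ≤ (-X) ω} := by
    ext ω; simp [le_abs]
  calc μ.real {ω | ε ≤ |X ω|}
      ≤ μ.real {ω | ε ≤ X ω} + μ.real {ω | ε ≤ (-X) ω} := hsplit ▸ measureReal_union_le _ _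
    _ ≤ exp (-ε ^ 2 / (2 * c)) + exp (-ε ^ 2 / (2 * c)) :=
      add_le_add (h.measure_ge_le hε) (h.neg.measure_ge_le hε)
    _ = 2 * exp (-ε ^ 2 / (2 * c)) := (two_mul _).symm

/-- **Hoeffding's inequality** for i.i.d. samples. -/
lemma measureReal_abs_sum_sub_integral_ge_le {ι : Type*} [Fintype ι] {μ : Measure Ω}
    [IsProbabilityMeasure μ] {Z : Ω → ℝ} (hZ : AEMeasurable Z μ) {a b : ℝ}
    (hab : ∀ᵐ x ∂μ, Z x ∈ Set.Icc a b) {ε : ℝ} (hε : 0 ≤ ε) :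
    (Measure.pi fun _ : ι => μ).real {ω | ε ≤ |∑ i, (Z (ω i) - μ[Z])|} ≤
      2 * exp (-2 * ε ^ 2 / (Fintype.card ι * (b - a) ^ 2)) := by
  have hindep : iIndepFun (fun i ω => Z (ω i) - μ[Z]) (Measure.pi fun _ : ι => μ) :=
    iIndepFun_pi (X := fun _ x => Z x - μ[Z]) fun _ => hZ.sub_const _
  have hsubG (i : ι) : HasSubgaussianMGF (fun ω : ι → Ω => Z (ω i) - μ[Z])
      ((‖b - a‖₊ / 2) ^ 2) (Measure.pi fun _ : ι => μ) := by
    refine HasSubgaussianMGF.of_map (X := fun x => Z x - μ[Z]) (Y := Function.eval i)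
      (measurable_pi_apply (X := fun _ : ι => Ω) i).aemeasurable ?_
    rw [(measurePreserving_eval _ i).map_eq]
    exact hasSubgaussianMGF_of_mem_Icc hZ hab
  convert (HasSubgaussianMGF.sum_of_iIndepFun hindep (s := Finset.univ)
    fun i _ => hsubG i).measureReal_abs_ge_le hε using 3
  push_cast
  rw [Finset.sum_const, Finset.card_univ, nsmul_eq_mul, norm_eq_abs, div_pow, sq_abs]
  generalize (b - a) ^ 2 = w
  ring

end ProbabilityTheory

lemma inner_rff {d N : ℕ} (α : Fin N → EuclideanSpace ℝ (Fin d))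
    (u v : EuclideanSpace ℝ (Fin d)) :
    ⟪rff α u, rff α v⟫ = (∑ k, Real.cos ⟪α k, u - v⟫) / N := by
  have hsqrt : 1 / √N * (1 / √N) = 1 / (N : ℝ) := by
    rw [one_div_mul_one_div, Real.mul_self_sqrt N.cast_nonneg]
  rw [rff, rff, PiLp.inner_apply, Fintype.sum_sum_type, ← Finset.sum_add_distrib,
    Finset.sum_div]
  refine Finset.sum_congr rfl fun k _ => ?_
  simp only [WithLp.equiv_symm_apply, PiLp.toLp_apply, Sum.elim_inl, Sum.elim_inr,
    RCLike.inner_apply, conj_trivial]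
  rw [inner_sub_right, Real.cos_sub]
  linear_combination
    (Real.cos ⟪α k, u⟫ * Real.cos ⟪α k, v⟫ + Real.sin ⟪α k, u⟫ * Real.sin ⟪α k, v⟫) * hsqrt

lemma sum_cos_sub_eq_natCast_mul_inner_rff_sub {d N : ℕ} (α : Fin N → EuclideanSpace ℝ (Fin d))
    (u v : EuclideanSpace ℝ (Fin d)) (c : ℝ) :
    ∑ k, (Real.cos ⟪α k, u - v⟫ - c) = N * (⟪rff α u, rff α v⟫ - c) := by
  rcases N.eq_zero_or_pos with rfl | hN
  · simp
  rw [inner_rff, Finset.sum_sub_distrib, Finset.sum_const, Finset.card_fin, nsmul_eq_mul,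
    mul_sub, mul_div_cancel₀ _ (by positivity)]

theorem rff_hoeffding_concentration_general
    (d N : ℕ)
    (p : Measure (EuclideanSpace ℝ (Fin d))) [IsProbabilityMeasure p]
    (K : EuclideanSpace ℝ (Fin d) → ℝ)
    (hK : ∀ Δ, K Δ = ∫ α, Real.cos ⟪α, Δ⟫ ∂p)
    (u v : EuclideanSpace ℝ (Fin d)) (ε : ℝ) (hε : 0 < ε) :
    (Measure.pi fun _ : Fin N => p)
        {α : Fin N → EuclideanSpace ℝ (Fin d) | ε ≤ |⟪rff α u, rff α v⟫ - K (u - v)|} ≤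
      ENNReal.ofReal (2 * Real.exp (-(N : ℝ) * ε ^ 2 / 2)) := by
  set Z : EuclideanSpace ℝ (Fin d) → ℝ := fun a => Real.cos ⟪a, u - v⟫
  have hevent : {α : Fin N → EuclideanSpace ℝ (Fin d) | ε ≤ |⟪rff α u, rff α v⟫ - K (u - v)|} ⊆
      {α | N * ε ≤ |∑ k, (Z (α k) - ∫ a, Z a ∂p)|} := by
    intro α hα
    rw [Set.mem_ofPred_eq, ← hK, sum_cos_sub_eq_natCast_mul_inner_rff_sub, abs_mul, Nat.abs_cast]
    exact mul_le_mul_of_nonneg_left hα N.cast_nonneg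
  have hZ : AEMeasurable Z p := by fun_prop
  have hZ_mem : ∀ᵐ a ∂p, Z a ∈ Set.Icc (-1) 1 :=
    ae_of_all _ fun a => ⟨Real.neg_one_le_cos _, Real.cos_le_one _⟩
  rw [ENNReal.le_ofReal_iff_toReal_le (measure_ne_top _ _) (by positivity)]
  calc _ ≤ _ := measureReal_mono hevent
    _ ≤ _ := ProbabilityTheory.measureReal_abs_sum_sub_integral_ge_le hZ hZ_mem (by positivity)
    _ = 2 * Real.exp (-(N : ℝ) * ε ^ 2 / 2) := by
      rcases eq_or_ne (N : ℝ) 0 with hN0 | hN0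
      · simp [hN0]
      · norm_num; field_simp; ring

theorem rff_hoeffding_concentration
    (d N : ℕ) (hN : 1 ≤ N)
    (p : Measure (EuclideanSpace ℝ (Fin d))) [IsProbabilityMeasure p]
    (K : EuclideanSpace ℝ (Fin d) → ℝ)
    (hK : ∀ Δ, K Δ = ∫ α, Real.cos ⟪α, Δ⟫ ∂p)
    (u v : EuclideanSpace ℝ (Fin d)) (ε : ℝ) (hε : 0 < ε) :
    (Measure.pi fun _ : Fin N => p)
        {α : Fin N → EuclideanSpace ℝ (Fin d) | ε ≤ |⟪rff α u, rff α v⟫ - K (u - v)|} ≤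
      ENNReal.ofReal (2 * Real.exp (-(N : ℝ) * ε ^ 2 / 2)) :=
  rff_hoeffding_concentration_general d N p K hK u v ε hε
end

section
/- Let (A, 𝒜, p) be a probability space, let X ⊆ ℝ^d be a measurable set with a probability measure μ on X, and let φ : X × A → ℝ be measurable with |φ(x, α)| ≤ 1 for all x ∈ X and α ∈ A. Let C > 0 and let β : A → ℝ be measurable with |β(α)| ≤ C for all α, and define g : X → ℝ by g(x) = ∫_A β(α) φ(x, α) dp(α). Then for every N ∈ ℕ with N ≥ 1 and every δ ∈ (0,1), there is a measurable set E ⊆ A^N with p^{⊗N}(E) ≥ 1 − δ such that for every (α_1, …, α_N) ∈ E there exist coefficients w_1, …, w_N ∈ ℝ with ( ∫_X ( g(x) − ∑_{j=1}^N w_j φ(x, α_j) )² dμ(x) )^{1/2} ≤ (C / √N) · ( 1 + √( 2 log(1/δ) ) ). -/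
/-!
Put `f x α = β α * φ x α` and `w j = β (α j) / N`: the approximant is then the empirical mean of
`f x ·` over the sample, and the error `Z α = ‖g - N⁻¹ ∑ j, f (·, α j)‖_{L²(μ)}` is a Monte Carlo
error. Swapping the integrals and using the variance `Var / N` of a sample mean gives
`E[Z²] ≤ C² / N`, hence `E Z ≤ C / √N`. Replacing one sample point moves `Z` by at most `2C / N`
(triangle inequality in `L²`), so by McDiarmid's inequality `Z - E Z` is sub-Gaussian with
variance proxy `C² / N`, and the Chernoff bound gives `Z ≤ E Z + (C / √N) √(2 log (1 / δ))` with
probability at least `1 - δ`. McDiarmid's inequality itself follows by integrating out one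
coordinate at a time and applying Hoeffding's lemma to each section.
-/

open MeasureTheory ProbabilityTheory Real
open scoped NNReal

section FinCons

variable {n : ℕ} {A : Fin (n + 1) → Type*} [∀ i, MeasurableSpace (A i)]

/- The codomain of `piFinSuccAbove A 0` is stated with `A (Fin.succAbove 0 j)`, which is `A j.succ`
only up to unfolding, so this lemma is applied through `congrArg` rather than by rewriting. -/
theorem MeasurableEquiv.piFinSuccAbove_zero_symm_apply (z : A 0 × ((i : Fin n) → A i.succ)) :
    (MeasurableEquiv.piFinSuccAbove A 0).symm z = Fin.cons z.1 z.2 := by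
  rw [MeasurableEquiv.piFinSuccAbove_symm_apply, Fin.insertNthEquiv_zero]; rfl

theorem measurable_fin_cons :
    Measurable fun z : A 0 × ((i : Fin n) → A i.succ) ↦
      (Fin.cons z.1 z.2 : (i : Fin (n + 1)) → A i) :=
  funext (MeasurableEquiv.piFinSuccAbove_zero_symm_apply (A := A)) ▸
    (MeasurableEquiv.piFinSuccAbove A 0).symm.measurable

theorem abs_integral_cons_sub_integral_cons_update_le {μ₀ : Measure (A 0)}
    [IsProbabilityMeasure μ₀]
    {F : ((i : Fin (n + 1)) → A i) → ℝ} (hF : ∀ y, Integrable (fun a ↦ F (Fin.cons a y)) μ₀)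
    {i : Fin n} {K : ℝ} (hK : ∀ x a, |F x - F (Function.update x i.succ a)| ≤ K)
    (y : (i : Fin n) → A i.succ) (a' : A i.succ) :
    |∫ a, F (Fin.cons a y) ∂μ₀ - ∫ a, F (Fin.cons a (Function.update y i a')) ∂μ₀| ≤ K := by
  rw [← integral_sub (hF y) (hF _)]
  have := norm_integral_le_of_norm_le_const (C := K) (μ := μ₀)
    (f := fun a ↦ F (Fin.cons a y) - F (Fin.cons a (Function.update y i a')))
    (ae_of_all _ fun a ↦ by simpa [Fin.cons_update] using hK (Fin.cons a y) a')
  simpa using this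

variable (μ : (i : Fin (n + 1)) → Measure (A i)) [∀ i, SigmaFinite (μ i)]

theorem integral_pi_eq_integral_integral_cons {F : ((i : Fin (n + 1)) → A i) → ℝ}
    (hF : Integrable (fun z ↦ F (Fin.cons z.1 z.2))
      ((μ 0).prod (Measure.pi fun i : Fin n ↦ μ i.succ))) :
    ∫ x, F x ∂Measure.pi μ =
      ∫ y, ∫ a, F (Fin.cons a y) ∂μ 0 ∂Measure.pi fun i : Fin n ↦ μ i.succ := by
  rw [← integral_prod_symm _ hF, ← (measurePreserving_piFinSuccAbove μ 0).symm.integral_comp']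
  exact integral_congr_ae (ae_of_all _ fun z ↦ congrArg F
    (MeasurableEquiv.piFinSuccAbove_zero_symm_apply z))

theorem ProbabilityTheory.HasSubgaussianMGF.pi_of_prod_cons {F : ((i : Fin (n + 1)) → A i) → ℝ}
    {m : ℝ} {c : ℝ≥0}
    (h : HasSubgaussianMGF (fun z ↦ F (Fin.cons z.1 z.2) - m) c
      ((μ 0).prod (Measure.pi fun i : Fin n ↦ μ i.succ))) :
    HasSubgaussianMGF (fun x ↦ F x - m) c (Measure.pi μ) := by
  set e := MeasurableEquiv.piFinSuccAbove A 0
  have hpres := measurePreserving_piFinSuccAbove μ 0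
  have hmap : HasSubgaussianMGF (fun z ↦ F (e.symm z) - m) c ((Measure.pi μ).map e) := by
    rw [hpres.map_eq]
    exact h.congr (ae_of_all _ fun z ↦ congrArg (· - m) (congrArg F
      (MeasurableEquiv.piFinSuccAbove_zero_symm_apply z).symm))
  exact (hmap.of_map hpres.measurable.aemeasurable).congr
    (ae_of_all _ fun x ↦ congrArg (· - m) (congrArg F (e.symm_apply_apply x)))

end FinCons

namespace ProbabilityTheory

theorem HasSubgaussianMGF.integrable_of_sub_const {Ω : Type*} [MeasurableSpace Ω] {μ : Measure Ω}
    [IsFiniteMeasure μ] {X : Ω → ℝ} {m : ℝ} {c : ℝ≥0}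
    (h : HasSubgaussianMGF (fun ω ↦ X ω - m) c μ) : Integrable X μ :=
  (h.integrable.add (integrable_const m)).congr (ae_of_all _ fun _ ↦ sub_add_cancel _ _)

theorem hasSubgaussianMGF_of_abs_sub_le {Ω : Type*} [MeasurableSpace Ω]
    {μ : Measure Ω} [IsProbabilityMeasure μ] {X : Ω → ℝ} (hX : AEMeasurable X μ) {c : ℝ≥0}
    (hc : ∀ ω ω', |X ω - X ω'| ≤ c) :
    HasSubgaussianMGF (fun ω ↦ X ω - μ[X]) ((c / 2) ^ 2) μ := by
  obtain ⟨ω₀⟩ := nonempty_of_isProbabilityMeasure μ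
  have : Nonempty Ω := ⟨ω₀⟩
  have hbdd : BddBelow (Set.range X) :=
    ⟨X ω₀ - c, by rintro _ ⟨ω, rfl⟩; linarith [abs_le.1 (hc ω₀ ω)]⟩
  have hIcc : ∀ ω, X ω ∈ Set.Icc (⨅ ω, X ω) ((⨅ ω, X ω) + c) := fun ω ↦
    ⟨ciInf_le hbdd ω, by
      have : X ω - c ≤ ⨅ ω, X ω := le_ciInf fun ω' ↦ by linarith [abs_le.1 (hc ω ω')]
      linarith⟩
  have := hasSubgaussianMGF_of_mem_Icc hX (ae_of_all _ hIcc)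
  rwa [add_sub_cancel_left, NNReal.nnnorm_eq] at this

section Prod

variable {α β : Type*} [MeasurableSpace α] [MeasurableSpace β] {μ : Measure α} {ν : Measure β}
  [SFinite μ] [SFinite ν]

theorem HasSubgaussianMGF.prod_of_ae_section {F : α × β → ℝ}
    (hF : AEStronglyMeasurable F (μ.prod ν))
    {G : β → ℝ} {m : ℝ} {c₁ c₂ : ℝ≥0}
    (h₁ : ∀ᵐ b ∂ν, HasSubgaussianMGF (fun a ↦ F (a, b) - G b) c₁ μ)
    (h₂ : HasSubgaussianMGF (fun b ↦ G b - m) c₂ ν) :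
    HasSubgaussianMGF (fun z ↦ F z - m) (c₁ + c₂) (μ.prod ν) := by
  have hsplit (t : ℝ) (b : β) : ∫ a, exp (t * (F (a, b) - m)) ∂μ =
      mgf (fun a ↦ F (a, b) - G b) μ t * exp (t * (G b - m)) := by
    rw [mgf, ← integral_mul_const]
    congr with a
    rw [← exp_add]
    ring_nf
  have hsection_le (t : ℝ) : ∀ᵐ b ∂ν, ∫ a, exp (t * (F (a, b) - m)) ∂μ ≤
      exp (c₁ * t ^ 2 / 2) * exp (t * (G b - m)) := by
    filter_upwards [h₁] with b hb
    rw [hsplit]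
    gcongr
    exact hb.mgf_le t
  have hint (t : ℝ) : Integrable (fun z ↦ exp (t * (F z - m))) (μ.prod ν) := by
    have hmeas : AEStronglyMeasurable (fun z ↦ exp (t * (F z - m))) (μ.prod ν) := by
      fun_prop
    refine (integrable_prod_iff' hmeas).2 ⟨?_, ?_⟩
    · filter_upwards [h₁] with b hb
      simp_rw [show ∀ a, t * (F (a, b) - m) = t * (F (a, b) - G b) + t * (G b - m) from
        fun a ↦ by ring, exp_add]
      exact (hb.integrable_exp_mul t).mul_const _
    · refine ((h₂.integrable_exp_mul t).const_mul (exp (c₁ * t ^ 2 / 2))).mono'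
        hmeas.norm.prod_swap.integral_prod_right' ?_
      filter_upwards [hsection_le t] with b hb
      simp only [Real.norm_eq_abs, abs_exp]
      rw [abs_of_nonneg (integral_nonneg fun a ↦ (exp_pos _).le)]
      exact hb
  refine ⟨hint, fun t ↦ ?_⟩
  calc mgf (fun z ↦ F z - m) (μ.prod ν) t
      = ∫ b, ∫ a, exp (t * (F (a, b) - m)) ∂μ ∂ν := integral_prod_symm _ (hint t)
    _ ≤ ∫ b, exp (c₁ * t ^ 2 / 2) * exp (t * (G b - m)) ∂ν :=
        integral_mono_of_nonneg (ae_of_all _ fun b ↦ integral_nonneg fun a ↦ (exp_pos _).le)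
          ((h₂.integrable_exp_mul t).const_mul _) (hsection_le t)
    _ = exp (c₁ * t ^ 2 / 2) * mgf (fun b ↦ G b - m) ν t := integral_const_mul _ _
    _ ≤ exp (c₁ * t ^ 2 / 2) * exp (c₂ * t ^ 2 / 2) := by gcongr; exact h₂.mgf_le t
    _ = exp ((c₁ + c₂ : ℝ≥0) * t ^ 2 / 2) := by rw [← exp_add]; push_cast; ring_nf

end Prod

/-- **McDiarmid's inequality**, in sub-Gaussian form. -/
theorem hasSubgaussianMGF_pi_of_abs_sub_update_le {n : ℕ} {A : Fin n → Type*}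
    [∀ i, MeasurableSpace (A i)] (μ : (i : Fin n) → Measure (A i))
    [∀ i, IsProbabilityMeasure (μ i)] (c : Fin n → ℝ≥0) {F : ((i : Fin n) → A i) → ℝ}
    (hF : Measurable F) (hc : ∀ x i a, |F x - F (Function.update x i a)| ≤ c i) :
    HasSubgaussianMGF (fun x ↦ F x - ∫ y, F y ∂Measure.pi μ) (∑ i, (c i / 2) ^ 2)
      (Measure.pi μ) := by
  induction n with
  | zero =>
    have hconst (x) : F x - ∫ y, F y ∂Measure.pi μ = 0 := by
      rw [integral_unique, sub_eq_zero, Subsingleton.elim x default]; simp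
    simp [hconst]
  | succ n ih =>
    have hcons : Measurable fun z : A 0 × ((i : Fin n) → A i.succ) ↦ F (Fin.cons z.1 z.2) :=
      hF.comp measurable_fin_cons
    set G : ((i : Fin n) → A i.succ) → ℝ := fun y ↦ ∫ a, F (Fin.cons a y) ∂μ 0
    have hsection (y) :
        HasSubgaussianMGF (fun a ↦ F (Fin.cons a y) - G y) ((c 0 / 2) ^ 2) (μ 0) :=
      hasSubgaussianMGF_of_abs_sub_le (hcons.comp measurable_prodMk_right).aemeasurable
        fun a a' ↦ by simpa [Fin.update_cons_zero] using hc (Fin.cons a y) 0 a'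
    have hG := ih (fun i ↦ μ i.succ) (fun i ↦ c i.succ)
      (hcons.comp measurable_swap).stronglyMeasurable.integral_prod_right'.measurable
      fun y i a' ↦ abs_integral_cons_sub_integral_cons_update_le
        (fun y ↦ (hsection y).integrable_of_sub_const) (hc · i.succ) y a'
    have hprod := HasSubgaussianMGF.prod_of_ae_section hcons.aestronglyMeasurable
      (ae_of_all _ hsection) hG
    rw [Fin.sum_univ_succ, integral_pi_eq_integral_integral_cons μ hprod.integrable_of_sub_const]
    exact hprod.pi_of_prod_cons μ

theorem HasSubgaussianMGF.ofReal_one_sub_le_measure_le_add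
    {Ω : Type*} [MeasurableSpace Ω] {μ : Measure Ω} [IsProbabilityMeasure μ] {X : Ω → ℝ}
    {m : ℝ} {c : ℝ≥0} (h : HasSubgaussianMGF (fun ω ↦ X ω - m) c μ) (hc : 0 < c) {δ : ℝ}
    (hδ : 0 < δ) :
    ENNReal.ofReal (1 - δ) ≤ μ {ω | X ω ≤ m + √(2 * c * log (1 / δ))} := by
  rcases lt_or_ge 1 δ with hδ1 | hδ1
  · simp [ENNReal.ofReal_of_nonpos (by linarith : 1 - δ ≤ 0)]
  set ε := √(2 * c * log (1 / δ))
  have hlog : 0 ≤ log (1 / δ) := log_nonneg (one_le_one_div hδ hδ1)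
  have htail : μ {ω | X ω ≤ m + ε}ᶜ ≤ ENNReal.ofReal δ := by
    calc μ {ω | X ω ≤ m + ε}ᶜ ≤ μ {ω | ε ≤ X ω - m} :=
          measure_mono fun ω hω ↦ by
            have : m + ε < X ω := not_le.1 hω
            show ε ≤ X ω - m
            linarith
      _ = ENNReal.ofReal (μ.real {ω | ε ≤ X ω - m}) := (ofReal_measureReal).symm
      _ ≤ ENNReal.ofReal (exp (-ε ^ 2 / (2 * c))) :=
          ENNReal.ofReal_le_ofReal (h.measure_ge_le (by positivity))
      _ = ENNReal.ofReal δ := by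
          rw [sq_sqrt (by positivity), neg_div, mul_div_cancel_left₀ _ (by positivity), exp_neg,
            exp_log (by positivity), one_div, inv_inv]
  calc ENNReal.ofReal (1 - δ) = 1 - ENNReal.ofReal δ := by
        rw [ENNReal.ofReal_sub _ hδ.le, ENNReal.ofReal_one]
    _ ≤ μ {ω | X ω ≤ m + ε} := by
        rw [tsub_le_iff_right]
        calc (1 : ENNReal) = μ Set.univ := measure_univ.symm
          _ ≤ μ {ω | X ω ≤ m + ε} + μ {ω | X ω ≤ m + ε}ᶜ := measure_univ_le_add_compl _
          _ ≤ _ := by gcongr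

theorem integral_pi_sq_integral_sub_sampleMean {A : Type*} [MeasurableSpace A]
    {p : Measure A} [IsProbabilityMeasure p] {h : A → ℝ} (hh : MemLp h 2 p) {N : ℕ} (hN : N ≠ 0) :
    ∫ αs, (∫ a, h a ∂p - (N : ℝ)⁻¹ * ∑ j, h (αs j)) ^ 2 ∂Measure.pi (fun _ : Fin N ↦ p) =
      Var[h; p] / N := by
  set S : (Fin N → A) → ℝ := fun αs ↦ (N : ℝ)⁻¹ * ∑ j, h (αs j)
  have hSvar : Var[S; Measure.pi fun _ ↦ p] = Var[h; p] / N := by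
    have hsum := variance_sum_pi (μ := fun _ : Fin N ↦ p) (fun _ ↦ hh)
    have hS : S = fun αs ↦ (N : ℝ)⁻¹ * (∑ j : Fin N, fun αs : Fin N → A ↦ h (αs j)) αs := by
      ext αs; simp [S, Finset.sum_apply]
    rw [hS, variance_const_mul, hsum]
    simp [field]
  have hSmean : ∫ αs, S αs ∂Measure.pi (fun _ ↦ p) = ∫ a, h a ∂p := by
    simp only [S]
    rw [integral_const_mul,
      integral_finsetSum _ fun j _ ↦ integrable_comp_eval (hh.integrable (by norm_num))]
    simp_rw [integral_comp_eval (μ := fun _ : Fin N ↦ p) hh.aestronglyMeasurable]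
    simp [field, hN]
  have hSmeas : AEMeasurable S (Measure.pi fun _ ↦ p) :=
    (Finset.aemeasurable_fun_sum _ fun j _ ↦
      (hh.comp_measurePreserving (measurePreserving_eval _ j)).aemeasurable).const_mul _
  rw [← hSvar, variance_eq_integral hSmeas, hSmean]
  congr with αs
  ring

end ProbabilityTheory

section L2

variable {Ω : Type*} [MeasurableSpace Ω] {μ : Measure Ω}

theorem MeasureTheory.MemLp.norm_toLp_eq_sqrt_integral_sq {f : Ω → ℝ} (hf : MemLp f 2 μ) :
    ‖hf.toLp f‖ = √(∫ x, f x ^ 2 ∂μ) := by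
  rw [← sqrt_sq (norm_nonneg _), ← real_inner_self_eq_norm_sq, L2.inner_def]
  congr 1
  refine integral_congr_ae ?_
  filter_upwards [hf.coeFn_toLp] with x hx
  simp [hx, sq]

theorem abs_sqrt_integral_sq_sub_le {f g : Ω → ℝ} (hf : MemLp f 2 μ) (hg : MemLp g 2 μ) :
    |√(∫ x, f x ^ 2 ∂μ) - √(∫ x, g x ^ 2 ∂μ)| ≤ √(∫ x, (f x - g x) ^ 2 ∂μ) := by
  have hsub := (hf.sub hg).norm_toLp_eq_sqrt_integral_sq
  rw [MemLp.toLp_sub hf hg] at hsub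
  rw [← hf.norm_toLp_eq_sqrt_integral_sq, ← hg.norm_toLp_eq_sqrt_integral_sq]
  exact (abs_norm_sub_norm_le _ _).trans_eq hsub

theorem sqrt_integral_sq_le_of_abs_le [IsProbabilityMeasure μ] {f : Ω → ℝ} {K : ℝ} (hK : 0 ≤ K)
    (h : ∀ᵐ x ∂μ, |f x| ≤ K) : √(∫ x, f x ^ 2 ∂μ) ≤ K := by
  refine sqrt_le_iff.2 ⟨hK, ?_⟩
  calc ∫ x, f x ^ 2 ∂μ ≤ ∫ _, K ^ 2 ∂μ :=
        integral_mono_of_nonneg (ae_of_all _ fun x ↦ sq_nonneg _) (integrable_const _)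
          (h.mono fun x hx ↦ sq_le_sq' (abs_le.1 hx).1 (abs_le.1 hx).2)
    _ = K ^ 2 := by simp

theorem integral_le_sqrt_integral_sq [IsProbabilityMeasure μ] {f : Ω → ℝ} (hf : MemLp f 2 μ) :
    ∫ x, f x ∂μ ≤ √(∫ x, f x ^ 2 ∂μ) := by
  have hvar := variance_nonneg f μ
  rw [variance_eq_sub hf, sub_nonneg] at hvar
  exact le_sqrt_of_sq_le hvar

end L2

section MonteCarlo

variable {Ω A : Type*} [MeasurableSpace A] {p : Measure A} {f : Ω → A → ℝ} {C : ℝ} {N : ℕ}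

noncomputable def monteCarloResidual (p : Measure A) (f : Ω → A → ℝ) {N : ℕ} (αs : Fin N → A)
    (x : Ω) : ℝ :=
  ∫ a, f x a ∂p - (N : ℝ)⁻¹ * ∑ j, f x (αs j)

theorem abs_monteCarloResidual_le [IsProbabilityMeasure p] (hC : ∀ x a, |f x a| ≤ C)
    (αs : Fin N → A) (x : Ω) : |monteCarloResidual p f αs x| ≤ 2 * C := by
  have hmean : |∫ a, f x a ∂p| ≤ C := by
    simpa using norm_integral_le_of_norm_le_const (μ := p) (f := f x)
      (ae_of_all _ fun a ↦ (Real.norm_eq_abs _).trans_le (hC x a))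
  have hsum : |(N : ℝ)⁻¹ * ∑ j, f x (αs j)| ≤ C := by
    rcases Nat.eq_zero_or_pos N with rfl | hN
    · simpa using (abs_nonneg _).trans hmean
    rw [abs_mul, abs_inv, Nat.abs_cast, inv_mul_le_iff₀ (by positivity)]
    simpa using (Finset.abs_sum_le_sum_abs _ Finset.univ).trans
      (Finset.sum_le_sum fun j _ ↦ hC x (αs j))
  unfold monteCarloResidual
  linarith [abs_sub _ _ |>.trans (add_le_add hmean hsum)]

variable [MeasurableSpace Ω] {μ : Measure Ω}

noncomputable def monteCarloL2Error (p : Measure A) (μ : Measure Ω) (f : Ω → A → ℝ) {N : ℕ}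
    (αs : Fin N → A) : ℝ :=
  √(∫ x, monteCarloResidual p f αs x ^ 2 ∂μ)

theorem measurable_monteCarloResidual [SFinite p] (hf : Measurable (Function.uncurry f)) :
    Measurable fun z : (Fin N → A) × Ω ↦ monteCarloResidual p f z.1 z.2 := by
  have hmean : Measurable fun x ↦ ∫ a, f x a ∂p :=
    hf.stronglyMeasurable.integral_prod_right'.measurable
  have hterm (j : Fin N) : Measurable fun z : (Fin N → A) × Ω ↦ f z.2 (z.1 j) :=
    hf.comp (measurable_snd.prodMk ((measurable_pi_apply j).comp measurable_fst))
  exact (hmean.comp measurable_snd).sub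
    ((Finset.measurable_sum _ fun j _ ↦ hterm j).const_mul _)

theorem memLp_monteCarloResidual [IsProbabilityMeasure p] [IsFiniteMeasure μ]
    (hf : Measurable (Function.uncurry f)) (hC : ∀ x a, |f x a| ≤ C) (αs : Fin N → A) :
    MemLp (monteCarloResidual p f αs) 2 μ :=
  MemLp.of_bound
    ((measurable_monteCarloResidual hf).comp measurable_prodMk_left).aestronglyMeasurable
    (2 * C) (ae_of_all _ (abs_monteCarloResidual_le hC αs))

theorem measurable_monteCarloL2Error [SFinite μ] [SFinite p]
    (hf : Measurable (Function.uncurry f)) : Measurable (monteCarloL2Error p μ f (N := N)) :=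
  ((measurable_monteCarloResidual hf).pow_const 2).stronglyMeasurable.integral_prod_right'
    |>.measurable.sqrt

theorem abs_monteCarloL2Error_sub_update_le [IsProbabilityMeasure μ] [IsProbabilityMeasure p]
    (hf : Measurable (Function.uncurry f)) (hC : ∀ x a, |f x a| ≤ C) (αs : Fin N → A)
    (k : Fin N) (a : A) :
    |monteCarloL2Error p μ f αs - monteCarloL2Error p μ f (Function.update αs k a)| ≤
      2 * C / N := by
  refine (abs_sqrt_integral_sq_sub_le (memLp_monteCarloResidual hf hC _)
    (memLp_monteCarloResidual hf hC _)).trans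
    (sqrt_integral_sq_le_of_abs_le ?_ (ae_of_all _ fun x ↦ ?_))
  · obtain ⟨x⟩ := nonempty_of_isProbabilityMeasure μ
    have := (abs_nonneg _).trans (hC x a)
    positivity
  · have hsum : ∑ j, f x (Function.update αs k a j) - ∑ j, f x (αs j) = f x a - f x (αs k) := by
      rw [← Finset.sum_sub_distrib, Finset.sum_eq_single k (fun j _ hj ↦ by simp [hj]) (by simp)]
      simp
    have hdiff : monteCarloResidual p f αs x - monteCarloResidual p f (Function.update αs k a) x =
        (N : ℝ)⁻¹ * (f x a - f x (αs k)) := by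
      rw [← hsum]; unfold monteCarloResidual; ring
    rw [hdiff, abs_mul, abs_inv, Nat.abs_cast, inv_mul_eq_div]
    gcongr
    linarith [abs_sub (f x a) (f x (αs k)), hC x a, hC x (αs k)]

theorem monteCarloL2Error_le [IsProbabilityMeasure μ] [IsProbabilityMeasure p]
    (hC : ∀ x a, |f x a| ≤ C) (αs : Fin N → A) : monteCarloL2Error p μ f αs ≤ 2 * C := by
  obtain ⟨x⟩ := nonempty_of_isProbabilityMeasure μ
  obtain ⟨a⟩ := nonempty_of_isProbabilityMeasure p
  exact sqrt_integral_sq_le_of_abs_le (by linarith [(abs_nonneg _).trans (hC x a)])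
    (ae_of_all _ (abs_monteCarloResidual_le hC αs))

theorem integral_monteCarloL2Error_le [IsProbabilityMeasure μ] [IsProbabilityMeasure p]
    (hf : Measurable (Function.uncurry f)) (hC : ∀ x a, |f x a| ≤ C) (hN : N ≠ 0) :
    ∫ αs, monteCarloL2Error p μ f αs ∂Measure.pi (fun _ : Fin N ↦ p) ≤ C / √N := by
  set P := Measure.pi fun _ : Fin N ↦ p
  obtain ⟨x₀⟩ := nonempty_of_isProbabilityMeasure μ
  obtain ⟨a₀⟩ := nonempty_of_isProbabilityMeasure p
  have hC0 : 0 ≤ C := (abs_nonneg _).trans (hC x₀ a₀)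
  have hpointwise (x : Ω) : ∫ αs, monteCarloResidual p f αs x ^ 2 ∂P ≤ C ^ 2 / N := by
    have hfx : MemLp (f x) 2 p :=
      MemLp.of_bound (hf.comp measurable_prodMk_left).aestronglyMeasurable C
        (ae_of_all _ fun a ↦ (Real.norm_eq_abs _).trans_le (hC x a))
    simp only [P, monteCarloResidual]
    rw [integral_pi_sq_integral_sub_sampleMean hfx hN]
    gcongr
    calc Var[f x; p] ≤ ((C - -C) / 2) ^ 2 :=
          variance_le_sq_of_bounded (ae_of_all _ fun a ↦ abs_le.1 (hC x a)) hfx.aemeasurable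
      _ = C ^ 2 := by ring
  have hsq : ∫ αs, monteCarloL2Error p μ f αs ^ 2 ∂P ≤ C ^ 2 / N := by
    simp_rw [monteCarloL2Error, sq_sqrt (integral_nonneg fun _ ↦ sq_nonneg _)]
    rw [integral_integral_swap]
    · calc ∫ x, ∫ αs, monteCarloResidual p f αs x ^ 2 ∂P ∂μ ≤ ∫ _, C ^ 2 / N ∂μ :=
            integral_mono_of_nonneg (ae_of_all _ fun x ↦ integral_nonneg fun _ ↦ sq_nonneg _)
              (integrable_const _) (ae_of_all _ hpointwise)
        _ = C ^ 2 / N := by simp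
    · exact Integrable.of_bound
        ((measurable_monteCarloResidual hf).pow_const 2).aestronglyMeasurable ((2 * C) ^ 2)
        (ae_of_all _ fun z ↦ by
          rw [Real.norm_eq_abs, Function.uncurry_apply_pair, abs_pow]
          exact pow_le_pow_left₀ (abs_nonneg _) (abs_monteCarloResidual_le hC z.1 z.2) 2)
  have hmem : MemLp (monteCarloL2Error p μ f) 2 P :=
    MemLp.of_bound (measurable_monteCarloL2Error hf).aestronglyMeasurable (2 * C)
      (ae_of_all _ fun αs ↦ (Real.norm_eq_abs _).trans_le
        ((abs_of_nonneg (sqrt_nonneg _)).trans_le (monteCarloL2Error_le hC αs)))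
  calc ∫ αs, monteCarloL2Error p μ f αs ∂P ≤ √(∫ αs, monteCarloL2Error p μ f αs ^ 2 ∂P) :=
        integral_le_sqrt_integral_sq hmem
    _ ≤ √(C ^ 2 / N) := sqrt_le_sqrt hsq
    _ = C / √N := by rw [sqrt_div' _ (Nat.cast_nonneg N), sqrt_sq hC0]

theorem ofReal_one_sub_le_measure_monteCarloL2Error_le [IsProbabilityMeasure μ]
    [IsProbabilityMeasure p] (hf : Measurable (Function.uncurry f)) (hC : ∀ x a, |f x a| ≤ C)
    (hC₀ : 0 < C) (hN : N ≠ 0) {δ : ℝ} (hδ : 0 < δ) :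
    ENNReal.ofReal (1 - δ) ≤ Measure.pi (fun _ : Fin N ↦ p)
      {αs | monteCarloL2Error p μ f αs ≤ C / √N * (1 + √(2 * log (1 / δ)))} := by
  have hNpos : (0 : ℝ) < N := Nat.cast_pos.2 (Nat.pos_of_ne_zero hN)
  set c : ℝ≥0 := ⟨2 * C / N, by positivity⟩
  have hmcd := hasSubgaussianMGF_pi_of_abs_sub_update_le (fun _ ↦ p) (fun _ ↦ c)
    (F := monteCarloL2Error p μ f) (measurable_monteCarloL2Error hf)
    (abs_monteCarloL2Error_sub_update_le hf hC)
  have hparam : ((∑ _ : Fin N, (c / 2) ^ 2 : ℝ≥0) : ℝ) = C ^ 2 / N := by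
    have hc : (c : ℝ) = 2 * C / N := rfl
    simp only [Finset.sum_const, Finset.card_univ, Fintype.card_fin, nsmul_eq_mul]
    push_cast [hc]
    field_simp
  have hdev : √(2 * ((∑ _ : Fin N, (c / 2) ^ 2 : ℝ≥0) : ℝ) * log (1 / δ)) =
      C / √N * √(2 * log (1 / δ)) := by
    rw [hparam, show 2 * (C ^ 2 / N) * log (1 / δ) = C ^ 2 / N * (2 * log (1 / δ)) by ring,
      sqrt_mul (by positivity), sqrt_div' _ hNpos.le, sqrt_sq hC₀.le]
  refine (hmcd.ofReal_one_sub_le_measure_le_add (by rw [← NNReal.coe_pos, hparam]; positivity)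
    hδ).trans (measure_mono fun αs hαs ↦ ?_)
  have hmean := integral_monteCarloL2Error_le (μ := μ) (p := p) hf hC hN
  have hαs' : monteCarloL2Error p μ f αs ≤ _ := hαs
  rw [hdev] at hαs'
  show monteCarloL2Error p μ f αs ≤ _
  linarith

end MonteCarlo

theorem rahimi_recht_random_features_L2_general
    {A : Type*} [MeasurableSpace A] (p : Measure A) [IsProbabilityMeasure p]
    (d : ℕ) (X : Set (EuclideanSpace ℝ (Fin d)))
    (μ : Measure X) [IsProbabilityMeasure μ]
    (φ : X → A → ℝ) (hφmeas : Measurable (Function.uncurry φ))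
    (hφbdd : ∀ (x : X) (α : A), |φ x α| ≤ 1)
    (C : ℝ) (hC : 0 < C)
    (β : A → ℝ) (hβmeas : Measurable β) (hβbdd : ∀ α, |β α| ≤ C)
    (g : X → ℝ) (hg : ∀ x, g x = ∫ α, β α * φ x α ∂p)
    (N : ℕ) (hN : 1 ≤ N) (δ : ℝ) (hδ : δ ∈ Set.Ioo (0 : ℝ) 1) :
    ∃ E : Set (Fin N → A), MeasurableSet E ∧
      ENNReal.ofReal (1 - δ) ≤ (Measure.pi fun _ : Fin N => p) E ∧
      ∀ αs ∈ E, ∃ w : Fin N → ℝ,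
        Real.sqrt (∫ x, (g x - ∑ j, w j * φ x (αs j)) ^ 2 ∂μ) ≤
          (C / Real.sqrt N) * (1 + Real.sqrt (2 * Real.log (1 / δ))) := by
  set f : X → A → ℝ := fun x α ↦ β α * φ x α
  have hf : Measurable (Function.uncurry f) := (hβmeas.comp measurable_snd).mul hφmeas
  have hfC (x : X) (α : A) : |f x α| ≤ C := by
    rw [abs_mul, ← mul_one C]
    exact mul_le_mul (hβbdd α) (hφbdd x α) (abs_nonneg _) hC.le
  refine ⟨{αs | monteCarloL2Error p μ f αs ≤ C / √N * (1 + √(2 * log (1 / δ)))},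
    measurableSet_le (measurable_monteCarloL2Error hf) measurable_const,
    ofReal_one_sub_le_measure_monteCarloL2Error_le hf hfC hC (by omega) hδ.1,
    fun αs hαs ↦ ⟨fun j ↦ β (αs j) / N, ?_⟩⟩
  have hresidual (x : X) :
      g x - ∑ j, β (αs j) / N * φ x (αs j) = monteCarloResidual p f αs x := by
    rw [monteCarloResidual, hg, Finset.mul_sum]
    congr 1
    exact Finset.sum_congr rfl fun j _ ↦ by ring
  simp_rw [hresidual]
  exact hαs

theorem rahimi_recht_random_features_L2
    {A : Type*} [MeasurableSpace A] (p : Measure A) [IsProbabilityMeasure p]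
    (d : ℕ) (X : Set (EuclideanSpace ℝ (Fin d))) (hX : MeasurableSet X)
    (μ : Measure X) [IsProbabilityMeasure μ]
    (φ : X → A → ℝ) (hφmeas : Measurable (Function.uncurry φ))
    (hφbdd : ∀ (x : X) (α : A), |φ x α| ≤ 1)
    (C : ℝ) (hC : 0 < C)
    (β : A → ℝ) (hβmeas : Measurable β) (hβbdd : ∀ α, |β α| ≤ C)
    (g : X → ℝ) (hg : ∀ x, g x = ∫ α, β α * φ x α ∂p)
    (N : ℕ) (hN : 1 ≤ N) (δ : ℝ) (hδ : δ ∈ Set.Ioo (0 : ℝ) 1) :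
    ∃ E : Set (Fin N → A), MeasurableSet E ∧
      ENNReal.ofReal (1 - δ) ≤ (Measure.pi fun _ : Fin N => p) E ∧
      ∀ αs ∈ E, ∃ w : Fin N → ℝ,
        Real.sqrt (∫ x, (g x - ∑ j, w j * φ x (αs j)) ^ 2 ∂μ) ≤
          (C / Real.sqrt N) * (1 + Real.sqrt (2 * Real.log (1 / δ))) :=
  rahimi_recht_random_features_L2_general p d X μ φ hφmeas hφbdd C hC β hβmeas hβbdd g hg N hN δ hδ
end

section
/- For every d ≥ 1 and every compact set K ⊂ ℝ^d, the linear span of the family of Gaussian radial basis functions { x ↦ exp( − a ‖x − b‖² ) : a > 0, b ∈ ℝ^d } is dense in the space C(K) of continuous real-valued functions on K with respect to the supremum norm. -/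
/-!
Completing the square shows that a product of two Gaussians is a multiple of a Gaussian, so
their span is closed under multiplication; and the constant `1` is the zero-width Gaussian, a
limit of Gaussians of positive width. Hence the closure of the span is a subalgebra of `C(K, ℝ)`.
It separates points, since `exp (-‖x - b‖²)` equals `1` only at `x = b`, so it is everything by
Stone–Weierstrass.
-/

open Real Set Submodule

variable {E : Type*} [NormedAddCommGroup E]

theorem mul_norm_sub_sq_add_mul_norm_sub_sq [InnerProductSpace ℝ E] {a a' : ℝ}
    (h : a + a' ≠ 0) (x b b' : E) :
    a * ‖x - b‖ ^ 2 + a' * ‖x - b'‖ ^ 2 =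
      a * a' / (a + a') * ‖b - b'‖ ^ 2 +
        (a + a') * ‖x - (a + a')⁻¹ • (a • b + a' • b')‖ ^ 2 := by
  simp only [norm_sub_sq_real, norm_smul, mul_pow, Real.norm_eq_abs, sq_abs, inner_smul_right,
    norm_add_sq_real, inner_add_right, real_inner_smul_left]
  field_simp
  ring

noncomputable def gaussianOn (K : Set E) (a : ℝ) (b : E) : C(K, ℝ) :=
  ⟨fun x => exp (-a * ‖(x : E) - b‖ ^ 2), by fun_prop⟩

@[simp]
theorem gaussianOn_apply (K : Set E) (a : ℝ) (b : E) (x : K) :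
    gaussianOn K a b x = exp (-a * ‖(x : E) - b‖ ^ 2) :=
  rfl

def gaussians (K : Set E) : Set C(K, ℝ) :=
  {g | ∃ a > 0, ∃ b, gaussianOn K a b = g}

variable {K : Set E}

theorem gaussianOn_mul_gaussianOn [InnerProductSpace ℝ E] {a a' : ℝ} (h : a + a' ≠ 0)
    (b b' : E) :
    gaussianOn K a b * gaussianOn K a' b' =
      exp (-(a * a' / (a + a')) * ‖b - b'‖ ^ 2) •
        gaussianOn K (a + a') ((a + a')⁻¹ • (a • b + a' • b')) := by
  ext x
  simp only [ContinuousMap.mul_apply, ContinuousMap.smul_apply, gaussianOn_apply, smul_eq_mul,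
    ← exp_add]
  congr 1
  linear_combination -(mul_norm_sub_sq_add_mul_norm_sub_sq h (x : E) b b')

theorem span_gaussians_mul_le [InnerProductSpace ℝ E] :
    span ℝ (gaussians K) * span ℝ (gaussians K) ≤ span ℝ (gaussians K) := by
  rw [span_mul_span, span_le]
  rintro _ ⟨_, ⟨a, ha, b, rfl⟩, _, ⟨a', ha', b', rfl⟩, rfl⟩
  show gaussianOn K a b * gaussianOn K a' b' ∈ _
  rw [gaussianOn_mul_gaussianOn (by positivity)]
  exact smul_mem _ _ (subset_span ⟨a + a', by positivity, _, rfl⟩)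

theorem continuous_gaussianOn_width (K : Set E) (b : E) : Continuous fun a => gaussianOn K a b :=
  ContinuousMap.continuous_of_continuous_uncurry _ <| by
    simp only [Function.uncurry_def, gaussianOn_apply]; fun_prop

theorem one_mem_closure_gaussians : (1 : C(K, ℝ)) ∈ closure (gaussians K) := by
  have h₀ : gaussianOn K 0 0 = 1 := by ext; simp
  rw [← h₀]
  refine map_mem_closure (f := fun a => gaussianOn K a 0) (s := Ioi 0)
    (continuous_gaussianOn_width K 0) ?_ fun a ha => ⟨a, ha, 0, rfl⟩
  rw [closure_Ioi]
  exact self_mem_Ici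

theorem separatesPoints_gaussians : ((⇑) '' gaussians K : Set (K → ℝ)).SeparatesPoints := by
  intro x y hxy
  refine ⟨_, ⟨gaussianOn K 1 x, ⟨1, one_pos, _, rfl⟩, rfl⟩, ?_⟩
  have hyx : 0 < ‖(y : E) - x‖ :=
    norm_pos_iff.mpr (sub_ne_zero.mpr (Subtype.coe_ne_coe.mpr hxy.symm))
  simp only [gaussianOn_apply, sub_self, norm_zero]
  rw [ne_eq, exp_eq_exp]
  nlinarith

theorem dense_span_gaussians [InnerProductSpace ℝ E] [CompactSpace K] :
    Dense (span ℝ (gaussians K) : Set C(K, ℝ)) := by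
  set T := (span ℝ (gaussians K)).topologicalClosure
  have h_one : (1 : C(K, ℝ)) ∈ T := closure_mono subset_span one_mem_closure_gaussians
  have h_mul (p q : C(K, ℝ)) (hp : p ∈ T) (hq : q ∈ T) : p * q ∈ T :=
    map_mem_closure₂ continuous_mul hp hq fun _ hp _ hq =>
      span_gaussians_mul_le (mul_mem_mul hp hq)
  let B := T.toSubalgebra h_one h_mul
  have hsep : B.SeparatesPoints := Set.separatesPoints_mono
    (image_mono (subset_span.trans (span ℝ (gaussians K)).le_topologicalClosure))
    separatesPoints_gaussians
  have hB := ContinuousMap.subalgebra_topologicalClosure_eq_top_of_separatesPoints B hsep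
  rw [dense_iff_closure_eq]
  simpa [B, T, closure_closure] using congrArg SetLike.coe hB

theorem exists_sum_gaussianOn_eq_of_mem_span {p : C(K, ℝ)} (hp : p ∈ span ℝ (gaussians K)) :
    ∃ (N : ℕ) (w a : Fin N → ℝ) (b : Fin N → E),
      (∀ i, 0 < a i) ∧ ∑ i, w i • gaussianOn K (a i) (b i) = p := by
  obtain ⟨N, w, g, rfl⟩ := mem_span_set'.mp hp
  choose a ha b hb using fun i => (g i).2
  exact ⟨N, w, a, b, ha, by simp only [hb]⟩

theorem gaussian_rbf_span_dense_general
    (d : ℕ)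
    (K : Set (EuclideanSpace ℝ (Fin d))) (hK : IsCompact K)
    (f : EuclideanSpace ℝ (Fin d) → ℝ) (hf : ContinuousOn f K)
    (ε : ℝ) (hε : 0 < ε) :
    ∃ (N : ℕ) (w a : Fin N → ℝ) (b : Fin N → EuclideanSpace ℝ (Fin d)),
      (∀ i, 0 < a i) ∧
      ∀ x ∈ K, |f x - ∑ i, w i * Real.exp (-(a i) * ‖x - b i‖ ^ 2)| < ε := by
  have : CompactSpace K := isCompact_iff_compactSpace.mp hK
  obtain ⟨p, hp, hfp⟩ := (dense_span_gaussians (K := K)).exists_dist_lt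
    (⟨K.domRestrict f, hf.domRestrict⟩ : C(K, ℝ)) hε
  obtain ⟨N, w, a, b, ha, rfl⟩ := exists_sum_gaussianOn_eq_of_mem_span hp
  refine ⟨N, w, a, b, ha, fun x hx => ?_⟩
  simpa [Real.dist_eq] using (ContinuousMap.dist_apply_le_dist ⟨x, hx⟩).trans_lt hfp

theorem gaussian_rbf_span_dense
    (d : ℕ) (hd : 1 ≤ d)
    (K : Set (EuclideanSpace ℝ (Fin d))) (hK : IsCompact K)
    (f : EuclideanSpace ℝ (Fin d) → ℝ) (hf : ContinuousOn f K)
    (ε : ℝ) (hε : 0 < ε) :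
    ∃ (N : ℕ) (w a : Fin N → ℝ) (b : Fin N → EuclideanSpace ℝ (Fin d)),
      (∀ i, 0 < a i) ∧
      ∀ x ∈ K, |f x - ∑ i, w i * Real.exp (-(a i) * ‖x - b i‖ ^ 2)| < ε :=
  gaussian_rbf_span_dense_general d K hK f hf ε hε
end

section
/- Let K ⊂ ℝ^d be compact, let U be a compact subset of C(K), and let F : U → ℝ be a continuous functional. Then for every ε > 0 there exist m ∈ ℕ, points x_1, …, x_m ∈ K, and a continuous function G : ℝ^m → ℝ such that for every u ∈ U, | F(u) − G( u(x_1), …, u(x_m) ) | < ε. In other words, every continuous functional on a compact subset of C(K) can be uniformly approximated by a continuous function of finitely many point evaluations of its argument. -/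
/-!
The continuous functions of finitely many point evaluations form a subalgebra of `C(U, ℝ)`
(concatenate the lists of points of two such functions). It contains every evaluation
`u ↦ u x`, and these separate the points of `U`, so by the Stone–Weierstrass theorem on the
compact space `U` it is dense.
-/

section FinitelyManyCoordinates

variable {T ι : Type*}

def IsContinuousFunctionOfFinitelyMany (f : ι → T → ℝ) (g : T → ℝ) : Prop :=
  ∃ (m : ℕ) (x : Fin m → ι) (G : (Fin m → ℝ) → ℝ),
    Continuous G ∧ ∀ t, g t = G (fun j => f (x j) t)

namespace IsContinuousFunctionOfFinitelyMany

variable {f : ι → T → ℝ}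

theorem coord (i : ι) : IsContinuousFunctionOfFinitelyMany f (f i) :=
  ⟨1, fun _ => i, fun z => z 0, continuous_apply 0, fun _ => rfl⟩

theorem const (r : ℝ) : IsContinuousFunctionOfFinitelyMany f (fun _ => r) :=
  ⟨0, Fin.elim0, fun _ => r, continuous_const, fun _ => rfl⟩

theorem comp₂ {op : ℝ → ℝ → ℝ} (hop : Continuous (Function.uncurry op))
    {g₁ g₂ : T → ℝ} (h₁ : IsContinuousFunctionOfFinitelyMany f g₁)
    (h₂ : IsContinuousFunctionOfFinitelyMany f g₂) :
    IsContinuousFunctionOfFinitelyMany f (fun t => op (g₁ t) (g₂ t)) := by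
  obtain ⟨m, x, G₁, hG₁, hg₁⟩ := h₁
  obtain ⟨n, y, G₂, hG₂, hg₂⟩ := h₂
  refine ⟨m + n, Fin.append x y,
    fun z => op (G₁ fun i => z (Fin.castAdd n i)) (G₂ fun i => z (Fin.natAdd m i)),
    ?_, fun t => ?_⟩
  · exact hop.comp₂ (hG₁.comp (by fun_prop)) (hG₂.comp (by fun_prop))
  · simp only [hg₁ t, hg₂ t, Fin.append_left, Fin.append_right]

end IsContinuousFunctionOfFinitelyMany

variable [TopologicalSpace T]

def ContinuousMap.finitelyDeterminedSubalgebra (f : ι → T → ℝ) :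
    Subalgebra ℝ C(T, ℝ) where
  carrier := {g | IsContinuousFunctionOfFinitelyMany f g}
  mul_mem' := IsContinuousFunctionOfFinitelyMany.comp₂ continuous_mul
  add_mem' := IsContinuousFunctionOfFinitelyMany.comp₂ continuous_add
  algebraMap_mem' r := IsContinuousFunctionOfFinitelyMany.const r

theorem ContinuousMap.mem_finitelyDeterminedSubalgebra {f : ι → T → ℝ} {g : C(T, ℝ)} :
    g ∈ finitelyDeterminedSubalgebra f ↔ IsContinuousFunctionOfFinitelyMany f g :=
  Iff.rfl

theorem exists_continuousFunctionOfFinitelyMany_near [CompactSpace T] (f : ι → C(T, ℝ))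
    (hsep : ∀ s t, s ≠ t → ∃ i, f i s ≠ f i t) (F : C(T, ℝ)) {ε : ℝ} (hε : 0 < ε) :
    ∃ (m : ℕ) (x : Fin m → ι) (G : (Fin m → ℝ) → ℝ),
      Continuous G ∧ ∀ t, |F t - G (fun j => f (x j) t)| < ε := by
  let A := ContinuousMap.finitelyDeterminedSubalgebra (fun i => ⇑(f i))
  have hA : A.SeparatesPoints := fun s t hst =>
    let ⟨i, hi⟩ := hsep s t hst
    have hfi : f i ∈ A :=
      ContinuousMap.mem_finitelyDeterminedSubalgebra.mpr
        (IsContinuousFunctionOfFinitelyMany.coord i)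
    ⟨f i, ⟨f i, hfi, rfl⟩, hi⟩
  obtain ⟨⟨g, m, x, G, hG, hgG⟩, hg⟩ :=
    ContinuousMap.exists_mem_subalgebra_near_continuousMap_of_separatesPoints A hA F ε hε
  refine ⟨m, x, G, hG, fun t => ?_⟩
  calc |F t - G (fun j => f (x j) t)| = ‖(g - F) t‖ := by
        rw [Real.norm_eq_abs, abs_sub_comm, ContinuousMap.sub_apply, hgG t]
    _ ≤ ‖g - F‖ := ContinuousMap.norm_coe_le_norm _ t
    _ < ε := hg

end FinitelyManyCoordinates

theorem functional_approx_by_point_evaluations_general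
    (d : ℕ) (K : Set (EuclideanSpace ℝ (Fin d)))
    (U : Set C(K, ℝ)) (hU : IsCompact U)
    (F : U → ℝ) (hF : Continuous F)
    (ε : ℝ) (hε : 0 < ε) :
    ∃ (m : ℕ) (x : Fin m → K) (G : (Fin m → ℝ) → ℝ),
      Continuous G ∧
      ∀ u : U, |F u - G (fun j => (u : C(K, ℝ)) (x j))| < ε := by
  have : CompactSpace U := isCompact_iff_compactSpace.mp hU
  let eval : K → C(U, ℝ) := fun x => ⟨fun u => (u : C(K, ℝ)) x, by fun_prop⟩
  have hsep : ∀ u v : U, u ≠ v → ∃ x, eval x u ≠ eval x v := fun u v huv =>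
    DFunLike.ne_iff.mp (Subtype.coe_injective.ne huv)
  exact exists_continuousFunctionOfFinitelyMany_near eval hsep ⟨F, hF⟩ hε

theorem functional_approx_by_point_evaluations
    (d : ℕ) (K : Set (EuclideanSpace ℝ (Fin d))) (hK : IsCompact K)
    (U : Set C(K, ℝ)) (hU : IsCompact U)
    (F : U → ℝ) (hF : Continuous F)
    (ε : ℝ) (hε : 0 < ε) :
    ∃ (m : ℕ) (x : Fin m → K) (G : (Fin m → ℝ) → ℝ),
      Continuous G ∧
      ∀ u : U, |F u - G (fun j => (u : C(K, ℝ)) (x j))| < ε :=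
  functional_approx_by_point_evaluations_general d K U hU F hF ε hε
end
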